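/- arXiv:2409.10988 — 4 statements merged into one kernel-verified Lean document; each statement's English description precedes it below -/
import Mathlib

section
/- Let p, q : ℝ → ℂ be locally integrable, λ ∈ ℂ, and define the x-dependent matrices H = [[0,1,0],[−p,0,1],[λ−q,−p,0]] and H̃ = [[0,1,0],[−p,0,1],[q−λ,−p,0]]. Suppose Φ, Φ̃ : ℝ → M₃(ℂ) are continuous and satisfy the integral equations Φ(x) = 1₃ + ∫₀ˣ H(s)Φ(s) ds and Φ̃(x) = 1₃ + ∫₀ˣ H̃(s)Φ̃(s) ds for all x ∈ ℝ. Then, with J = [[0,0,1],[0,−1,0],[1,0,0]], one has Φ̃(x)ᵀ J Φ(x) = J for all x ∈ ℝ; in particular Φ(x) is invertible and Φ̃(x) = J (Φ(x)ᵀ)⁻¹ J. -/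
/-!
Along a solution, `Φ̃ᵀ J Φ` has derivative `Φ̃ᵀ (H̃ᵀ J + J H) Φ`, and `H̃ᵀ J + J H = 0` for the
given coefficient matrices. The entries of `Φ` and `Φ̃` are primitives of locally integrable
functions, hence absolutely continuous and differentiable almost everywhere, so `Φ̃ᵀ J Φ` is
constant, equal to its value `J` at `0`. Since `J² = 1`, `J Φ̃ᵀ J` is then a left inverse of `Φ`.
-/

open MeasureTheory Matrix Set Filter

theorem MeasureTheory.LocallyIntegrable.intervalIntegrable {E : Type*} [NormedAddCommGroup E]
    {f : ℝ → E} (hf : LocallyIntegrable f) (a b : ℝ) : IntervalIntegrable f volume a b :=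
  intervalIntegrable_iff.mpr <|
    (hf.integrableOn_isCompact isCompact_uIcc).mono_set uIoc_subset_uIcc

namespace AbsolutelyContinuousOnInterval

variable {a b : ℝ}

theorem const {X : Type*} [PseudoMetricSpace X] (c : X) :
    AbsolutelyContinuousOnInterval (fun _ => c) a b := by
  simpa [AbsolutelyContinuousOnInterval] using tendsto_const_nhds

theorem finsetSum {E ι : Type*} [SeminormedAddCommGroup E] (s : Finset ι) {f : ι → ℝ → E}
    (hf : ∀ i ∈ s, AbsolutelyContinuousOnInterval (f i) a b) :
    AbsolutelyContinuousOnInterval (fun x => ∑ i ∈ s, f i x) a b := by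
  simpa only [← Finset.sum_apply] using
    Finset.sum_induction f (AbsolutelyContinuousOnInterval · a b) (fun _ _ => add) (const 0) hf

end AbsolutelyContinuousOnInterval

section RCLike

variable {𝕜 : Type*} [RCLike 𝕜]

theorem MeasureTheory.LocallyIntegrable.absolutelyContinuousOnInterval_intervalIntegral
    {f : ℝ → 𝕜} (hf : LocallyIntegrable f) {a b c : ℝ} (hc : c ∈ uIcc a b) :
    AbsolutelyContinuousOnInterval (fun x => ∫ v in c..x, f v) a b := by
  have hre : IntervalIntegrable (fun v => RCLike.re (f v)) volume a b :=
    ⟨(hf.intervalIntegrable a b).1.re, (hf.intervalIntegrable a b).2.re⟩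
  have him : IntervalIntegrable (fun v => RCLike.im (f v)) volume a b :=
    ⟨(hf.intervalIntegrable a b).1.im, (hf.intervalIntegrable a b).2.im⟩
  have hsplit : (fun x => ∫ v in c..x, f v) = fun x =>
      (∫ v in c..x, RCLike.re (f v)) • (1 : 𝕜) + (∫ v in c..x, RCLike.im (f v)) • RCLike.I := by
    funext x
    rw [intervalIntegral.intervalIntegral_re (hf.intervalIntegrable c x),
      intervalIntegral.intervalIntegral_im (hf.intervalIntegrable c x)]
    simp only [RCLike.real_smul_eq_coe_mul, mul_one]
    exact (RCLike.re_add_im _).symm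
  rw [hsplit]
  exact ((hre.absolutelyContinuousOnInterval_intervalIntegral hc).smul (.const _)).fun_add
    ((him.absolutelyContinuousOnInterval_intervalIntegral hc).smul (.const _))

theorem absolutelyContinuousOnInterval_of_eq_add_intervalIntegral {f u : ℝ → 𝕜} {c : 𝕜}
    (hu : LocallyIntegrable u) (hf : ∀ x, f x = c + ∫ s in (0 : ℝ)..x, u s) (x : ℝ) :
    AbsolutelyContinuousOnInterval f 0 x := by
  rw [funext hf]
  exact (AbsolutelyContinuousOnInterval.const c).fun_add
    (hu.absolutelyContinuousOnInterval_intervalIntegral left_mem_uIcc)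

theorem ae_hasDerivAt_of_eq_add_intervalIntegral {E : Type*} [NormedAddCommGroup E]
    [NormedSpace ℝ E] [CompleteSpace E] {f u : ℝ → E} {c : E}
    (hu : LocallyIntegrable u) (hf : ∀ x, f x = c + ∫ s in (0 : ℝ)..x, u s) :
    ∀ᵐ x, HasDerivAt f (u x) x := by
  rw [funext hf]
  filter_upwards [LocallyIntegrable.ae_hasDerivAt_integral hu] with x hx using (hx 0).const_add c

section MatrixEntries

variable {m n p : Type*} [Fintype n]

theorem locallyIntegrable_mul_apply {A : ℝ → Matrix m n 𝕜} {B : ℝ → Matrix n p 𝕜}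
    (hA : ∀ i j, LocallyIntegrable (A · i j)) (hB : ∀ j k, Continuous (B · j k)) (i : m) (k : p) :
    LocallyIntegrable (fun x => (A x * B x) i k) := by
  simp only [mul_apply]
  exact locallyIntegrable_finsetSum _ fun j _ => locallyIntegrableOn_univ.mp <|
    ((hA i j).locallyIntegrableOn univ).mul_continuousOn (hB j k).continuousOn
      isClosed_univ.isLocallyClosed

theorem absolutelyContinuousOnInterval_mul_apply {A : ℝ → Matrix m n 𝕜} {B : ℝ → Matrix n p 𝕜}
    {a b : ℝ} (hA : ∀ i j, AbsolutelyContinuousOnInterval (A · i j) a b)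
    (hB : ∀ j k, AbsolutelyContinuousOnInterval (B · j k) a b) (i : m) (k : p) :
    AbsolutelyContinuousOnInterval (fun x => (A x * B x) i k) a b := by
  simp only [mul_apply, ← smul_eq_mul]
  exact .finsetSum _ fun j _ => (hA i j).fun_smul (hB j k)

theorem hasDerivAt_mul_apply {𝔸 : Type*} [NormedRing 𝔸] [NormedAlgebra ℝ 𝔸]
    {A : ℝ → Matrix m n 𝔸} {B : ℝ → Matrix n p 𝔸} {A' : Matrix m n 𝔸} {B' : Matrix n p 𝔸} {x : ℝ}
    (hA : ∀ i j, HasDerivAt (A · i j) (A' i j) x) (hB : ∀ j k, HasDerivAt (B · j k) (B' j k) x)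
    (i : m) (k : p) :
    HasDerivAt (fun y => (A y * B y) i k) ((A' * B x + A x * B') i k) x := by
  simp only [mul_apply, Matrix.add_apply, ← Finset.sum_add_distrib]
  exact HasDerivAt.fun_sum fun j _ => (hA i j).fun_mul (hB j k)

end MatrixEntries

theorem transpose_mul_mul_eq_of_eq_one_add_intervalIntegral {n : Type*} [Fintype n]
    [DecidableEq n] {H Ht Φ Φt : ℝ → Matrix n n 𝕜} {J : Matrix n n 𝕜}
    (hH : ∀ i j, LocallyIntegrable (H · i j)) (hHt : ∀ i j, LocallyIntegrable (Ht · i j))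
    (hΦc : ∀ i j, Continuous (Φ · i j)) (hΦtc : ∀ i j, Continuous (Φt · i j))
    (hΦ : ∀ x i j, Φ x i j = (1 : Matrix n n 𝕜) i j + ∫ s in (0 : ℝ)..x, (H s * Φ s) i j)
    (hΦt : ∀ x i j, Φt x i j = (1 : Matrix n n 𝕜) i j + ∫ s in (0 : ℝ)..x, (Ht s * Φt s) i j)
    (hJ : ∀ s, (Ht s)ᵀ * J + J * H s = 0) (x : ℝ) :
    (Φt x)ᵀ * J * Φ x = J := by
  have hHΦ := locallyIntegrable_mul_apply hH hΦc
  have hHtΦt := locallyIntegrable_mul_apply hHt hΦtc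
  ext i j
  set w : ℝ → 𝕜 := fun y => ((Φt y)ᵀ * J * Φ y) i j
  have hΦac : ∀ k l, AbsolutelyContinuousOnInterval (Φ · k l) 0 x := fun k l =>
    absolutelyContinuousOnInterval_of_eq_add_intervalIntegral (hHΦ k l) (hΦ · k l) x
  have hΦtac : ∀ k l, AbsolutelyContinuousOnInterval (fun y => (Φt y)ᵀ k l) 0 x := fun k l =>
    absolutelyContinuousOnInterval_of_eq_add_intervalIntegral (hHtΦt l k) (hΦt · l k) x
  have hw_ac : AbsolutelyContinuousOnInterval w 0 x :=
    absolutelyContinuousOnInterval_mul_apply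
      (absolutelyContinuousOnInterval_mul_apply hΦtac (B := fun _ => J) fun _ _ => .const _)
      hΦac i j
  have hw' : ∀ᵐ y, y ∈ uIcc 0 x → HasDerivAt w 0 y := by
    have hΦ' : ∀ᵐ y, ∀ k l, HasDerivAt (Φ · k l) ((H y * Φ y) k l) y := by
      simp only [ae_all_iff]
      exact fun k l => ae_hasDerivAt_of_eq_add_intervalIntegral (hHΦ k l) (hΦ · k l)
    have hΦt' : ∀ᵐ y, ∀ k l, HasDerivAt (Φt · k l) ((Ht y * Φt y) k l) y := by
      simp only [ae_all_iff]
      exact fun k l => ae_hasDerivAt_of_eq_add_intervalIntegral (hHtΦt k l) (hΦt · k l)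
    filter_upwards [hΦ', hΦt'] with y hy hty _
    have hw'y := hasDerivAt_mul_apply (hasDerivAt_mul_apply (A := fun y => (Φt y)ᵀ)
      (A' := (Ht y * Φt y)ᵀ) (B := fun _ => J) (B' := 0) (fun k l => hty l k)
      (fun _ _ => hasDerivAt_const y _)) hy i j
    have hw'y_eq : ((Ht y * Φt y)ᵀ * J + (Φt y)ᵀ * 0) * Φ y + (Φt y)ᵀ * J * (H y * Φ y)
        = (Φt y)ᵀ * ((Ht y)ᵀ * J + J * H y) * Φ y := by
      simp only [transpose_mul, Matrix.mul_zero, add_zero, Matrix.mul_add, Matrix.add_mul,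
        Matrix.mul_assoc]
    rwa [hw'y_eq, hJ, Matrix.mul_zero, Matrix.zero_mul, Matrix.zero_apply] at hw'y
  obtain ⟨C, hC⟩ := hw_ac.const_of_ae_hasDerivAt_zero hw'
  have hΦ0 : Φ 0 = 1 := by ext k l; simp [hΦ]
  have hΦt0 : Φt 0 = 1 := by ext k l; simp [hΦt]
  calc w x = w 0 := (hC x right_mem_uIcc).trans (hC 0 left_mem_uIcc).symm
    _ = J i j := by simp [w, hΦ0, hΦt0]

end RCLike

theorem Matrix.isUnit_and_eq_mul_transpose_inv_mul_of_transpose_mul_mul_eq {n R : Type*}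
    [Fintype n] [DecidableEq n] [CommRing R] {A B J : Matrix n n R} (hJJ : J * J = 1)
    (hJT : Jᵀ = J) (h : Aᵀ * J * B = J) : IsUnit B ∧ A = J * (Bᵀ)⁻¹ * J := by
  have hleft : J * Aᵀ * J * B = 1 := by
    simp only [Matrix.mul_assoc] at h ⊢
    rw [h, hJJ]
  refine ⟨(isUnit_iff_isUnit_det B).mpr (isUnit_det_of_left_inverse hleft), ?_⟩
  rw [← transpose_nonsing_inv, inv_eq_left_inv hleft, transpose_mul, transpose_mul, hJT,
    transpose_transpose]
  simp only [← Matrix.mul_assoc, hJJ, Matrix.one_mul]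
  rw [Matrix.mul_assoc, hJJ, Matrix.mul_one]

/-- Let `p, q : ℝ → ℂ` be locally integrable, `λ ∈ ℂ`, and let
`H = [[0,1,0],[−p,0,1],[λ−q,−p,0]]` and `H̃ = [[0,1,0],[−p,0,1],[q−λ,−p,0]]`.
If `Φ, Φ̃ : ℝ → M₃(ℂ)` are continuous (entrywise) and satisfy the entrywise integral
equations `Φ(x) = 1₃ + ∫₀ˣ H(s)Φ(s) ds` and `Φ̃(x) = 1₃ + ∫₀ˣ H̃(s)Φ̃(s) ds`, then with
`J = [[0,0,1],[0,−1,0],[1,0,0]]` one has `Φ̃(x)ᵀ J Φ(x) = J` for all `x`; in particular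
`Φ(x)` is invertible and `Φ̃(x) = J (Φ(x)ᵀ)⁻¹ J`. -/
theorem wtPhi_transpose_J_Phi_eq_J
    (p q : ℝ → ℂ) (hp : LocallyIntegrable p) (hq : LocallyIntegrable q)
    (lam : ℂ)
    (H Ht : ℝ → Matrix (Fin 3) (Fin 3) ℂ)
    (hH : ∀ s, H s = !![0, 1, 0; -p s, 0, 1; lam - q s, -p s, 0])
    (hHt : ∀ s, Ht s = !![0, 1, 0; -p s, 0, 1; q s - lam, -p s, 0])
    (Φ Φt : ℝ → Matrix (Fin 3) (Fin 3) ℂ)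
    (hΦc : ∀ i j, Continuous fun x => Φ x i j)
    (hΦtc : ∀ i j, Continuous fun x => Φt x i j)
    (hΦ : ∀ x i j, Φ x i j =
      (1 : Matrix (Fin 3) (Fin 3) ℂ) i j + ∫ s in (0:ℝ)..x, (H s * Φ s) i j)
    (hΦt : ∀ x i j, Φt x i j =
      (1 : Matrix (Fin 3) (Fin 3) ℂ) i j + ∫ s in (0:ℝ)..x, (Ht s * Φt s) i j)
    (J : Matrix (Fin 3) (Fin 3) ℂ)
    (hJ : J = !![0, 0, 1; 0, -1, 0; 1, 0, 0]) :
    ∀ x : ℝ, (Φt x)ᵀ * J * Φ x = J ∧ IsUnit (Φ x) ∧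
      Φt x = J * ((Φ x)ᵀ)⁻¹ * J := by
  have hloc : ∀ r : ℝ → ℂ, LocallyIntegrable r → ∀ i j,
      LocallyIntegrable (fun s => !![0, 1, 0; -p s, 0, 1; r s, -p s, 0] i j) := by
    intro r hr i j
    fin_cases i <;> fin_cases j <;>
      simp only [Fin.mk_one, Fin.isValue, Fin.reduceFinMk, Fin.zero_eta, of_apply, cons_val',
        cons_val, cons_val_zero, cons_val_one, cons_val_fin_one] <;>
      first | exact locallyIntegrable_const _ | exact hp.neg | exact hr
  have hHloc : ∀ i j, LocallyIntegrable (H · i j) := by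
    simpa only [hH] using hloc (fun s => lam - q s) ((locallyIntegrable_const lam).sub hq)
  have hHtloc : ∀ i j, LocallyIntegrable (Ht · i j) := by
    simpa only [hHt] using hloc (fun s => q s - lam) (hq.sub (locallyIntegrable_const lam))
  have hcompat : ∀ s, (Ht s)ᵀ * J + J * H s = 0 := by
    intro s
    rw [hH, hHt, hJ]
    ext i j
    fin_cases i <;> fin_cases j <;> simp [mul_apply, Fin.sum_univ_three]
  have hJJ : J * J = 1 := by
    rw [hJ]; ext i j; fin_cases i <;> fin_cases j <;> simp [mul_apply, Fin.sum_univ_three]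
  have hJT : Jᵀ = J := by
    rw [hJ]; ext i j; fin_cases i <;> fin_cases j <;> rfl
  intro x
  have hmain :=
    transpose_mul_mul_eq_of_eq_one_add_intervalIntegral hHloc hHtloc hΦc hΦtc hΦ hΦt hcompat x
  exact ⟨hmain, isUnit_and_eq_mul_transpose_inv_mul_of_transpose_mul_mul_eq hJJ hJT hmain⟩
end

section
/- Let N ∈ ℕ. There exist absolute constants c > 0 and C > 0 with the following property. Let p, q be real-valued 1-periodic functions in L²(𝕋) with ‖u‖ ≤ c/N, and let λ ∈ ℂ with Im λ ≥ 0 and |λ| > 1, z = λ^{1/3}. Then the integral equation X(x) = 1₃ + (1/z)·(K₁X)(x) on [0,N], where (K₁X)_{lj}(x) = ∫₀ᴺ K_{lj}(x,s)·(F₁(s)X(s))_{lj} ds with kernels K_{lj}(x,s) = e^{z(x−s)(ω^l−ω^j)} for s ≤ x when l < j, K_{lj}(x,s) = −e^{z(x−s)(ω^l−ω^j)} for s ≥ x when l ≥ j, and K_{lj}(x,s) = 0 otherwise, has a unique continuous 3×3-matrix-valued solution X₁ on [0,N]. Moreover: (X₁)_{lj}(0) = 0 and (X₁)_{jl}(N)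 = 0 for 1 ≤ l < j ≤ 3, (X₁)_{jj}(N) = 1 for j = 1,2,3, sup_{x∈[0,N]} ‖X₁(x)‖ ≤ 2, sup_{x∈[0,N]} ‖X₁(x) − 1₃‖ ≤ C N ‖u‖/|z|, every X₁(x) is invertible, and sup_{x∈[0,N]} ‖X₁(x)⁻¹ − 1₃‖ ≤ C N ‖u‖/|z|. -/
/-! Since `arg z ∈ [0, π/3]`, every exponential in the kernels `K_{lj}` has modulus at most `1`,
and `1`-periodicity with Cauchy–Schwarz gives `M := ∫₀ᴺ (|p| + |q|) ≤ 2N‖u‖`. As the entries of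
`F₁` are bounded by `(|p| + |q|)/3`, the map `X ↦ 1₃ + K₁X/z` is a contraction with constant
`M/|z| ≤ 1/36` for the entrywise sup norm on continuous matrix functions on `[0,N]`. Its fixed point
is the unique solution and lies within `2M/|z|` of `1₃`; the operator norm is at most nine times the
entrywise norm, and a Neumann series gives invertibility and the bound on `X₁⁻¹ − 1₃`. The
boundary values hold because at `x = 0` the kernels with `l < j`, and at `x = N` those with
`l ≥ j`, vanish on `(0,N)`. -/

open MeasureTheory Complex Matrix

noncomputable def omg : ℂ := Complex.exp (2 * Real.pi * Complex.I / 3)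

noncomputable def Om1 : Matrix (Fin 3) (Fin 3) ℂ :=
  !![omg ^ 2, -omg, -1; -omg ^ 2, omg, -1; -omg ^ 2, -omg, 1]

noncomputable def Om2 : Matrix (Fin 3) (Fin 3) ℂ :=
  !![omg, omg, omg; omg ^ 2, omg ^ 2, omg ^ 2; 1, 1, 1]

/-- `F₁(s) = −(p(s)/3)Ω₁ − (q(s)/(3z))Ω₂`. -/
noncomputable def F1m (p q : ℝ → ℝ) (z : ℂ) (s : ℝ) : Matrix (Fin 3) (Fin 3) ℂ :=
  (-(p s : ℂ) / 3) • Om1 + (-(q s : ℂ) / (3 * z)) • Om2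

/-- The Birkhoff kernels `K_{lj}(x,s)`, indexed by `l, j : Fin 3` (so `l` stands for
`l+1 ∈ {1,2,3}` and `ω^l` means `ω^{l+1}`): `e^{z(x−s)(ω^l−ω^j)}` for `s ≤ x` when
`l < j`, `−e^{z(x−s)(ω^l−ω^j)}` for `s ≥ x` when `l ≥ j`, and `0` otherwise. -/
noncomputable def K1ker (z : ℂ) (l j : Fin 3) (x s : ℝ) : ℂ :=
  if (l : ℕ) < (j : ℕ) then
    (if s ≤ x then
      Complex.exp (z * ((x - s : ℝ) : ℂ) * (omg ^ ((l : ℕ) + 1) - omg ^ ((j : ℕ) + 1)))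
    else 0)
  else
    (if x ≤ s then
      -Complex.exp (z * ((x - s : ℝ) : ℂ) * (omg ^ ((l : ℕ) + 1) - omg ^ ((j : ℕ) + 1)))
    else 0)

/-- The operator norm of a `3 × 3` complex matrix with respect to the Euclidean norm. -/
noncomputable def opN (A : Matrix (Fin 3) (Fin 3) ℂ) : ℝ :=
  ‖Matrix.toEuclideanCLM (𝕜 := ℂ) (n := Fin 3) A‖

/-- `X` is a continuous solution on `[0,N]` of the Birkhoff integral equation
`X = 1₃ + K₁X/z`. -/
def SolvesBirkhoff1 (p q : ℝ → ℝ) (z : ℂ) (N : ℕ)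
    (X : ℝ → Matrix (Fin 3) (Fin 3) ℂ) : Prop :=
  (∀ l j : Fin 3, ContinuousOn (fun x => X x l j) (Set.Icc (0:ℝ) (N:ℝ))) ∧
  ∀ x ∈ Set.Icc (0:ℝ) (N:ℝ), ∀ l j : Fin 3,
    X x l j = (1 : Matrix (Fin 3) (Fin 3) ℂ) l j
      + z⁻¹ * ∫ s in (0:ℝ)..(N:ℝ), K1ker z l j x s * (F1m p q z s * X s) l j

open Set

lemma omg_eq : omg = ⟨-(1 / 2), √3 / 2⟩ := by
  have h : 2 * Real.pi * I / 3 = ((Real.pi - Real.pi / 3 : ℝ) : ℂ) * I := by push_cast; ring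
  rw [omg, h, exp_mul_I, ← ofReal_cos, ← ofReal_sin, Real.cos_pi_sub, Real.sin_pi_sub,
    Real.cos_pi_div_three, Real.sin_pi_div_three]
  apply Complex.ext <;> simp

lemma omg_sq_eq : omg ^ 2 = ⟨-(1 / 2), -(√3 / 2)⟩ := by
  have h3 : √3 ^ 2 = 3 := Real.sq_sqrt (by norm_num)
  rw [sq, omg_eq]
  apply Complex.ext <;> simp <;> nlinarith

lemma omg_pow_three : omg ^ 3 = 1 := by
  have h3 : √3 ^ 2 = 3 := Real.sq_sqrt (by norm_num)
  rw [pow_succ, omg_sq_eq, omg_eq]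
  apply Complex.ext <;> simp <;> nlinarith

lemma norm_omg : ‖omg‖ = 1 := by
  have h : 2 * Real.pi * I / 3 = ((2 * Real.pi / 3 : ℝ) : ℂ) * I := by push_cast; ring
  rw [omg, h, norm_exp_ofReal_mul_I]

/-- The hypotheses on `z` say `0 ≤ arg z ≤ π/3`. -/
lemma re_mul_omg_pow_sub_nonpos {z : ℂ} (him : 0 ≤ z.im) (hsec : √3 * z.im ≤ 3 * z.re)
    {l j : Fin 3} (hlj : (l : ℕ) < j) :
    (z * (omg ^ ((l : ℕ) + 1) - omg ^ ((j : ℕ) + 1))).re ≤ 0 := by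
  have h3 : 0 ≤ √3 := Real.sqrt_nonneg 3
  fin_cases l <;> fin_cases j <;> simp at hlj <;>
    norm_num [omg_pow_three, omg_sq_eq] <;> norm_num [omg_eq] <;> nlinarith

lemma norm_cexp_mul_le_one {w : ℂ} {t : ℝ} (h : t * w.re ≤ 0) : ‖exp (t * w)‖ ≤ 1 := by
  rw [norm_exp, Real.exp_le_one_iff]
  simpa using h

lemma norm_K1ker_le_one {z : ℂ} (him : 0 ≤ z.im) (hsec : √3 * z.im ≤ 3 * z.re)
    (l j : Fin 3) (x s : ℝ) : ‖K1ker z l j x s‖ ≤ 1 := by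
  have hexp : ∀ d : ℂ, (x - s) * (z * d).re ≤ 0 →
      ‖exp (z * ((x - s : ℝ) : ℂ) * d)‖ ≤ 1 := fun d h => by
    rw [show z * ((x - s : ℝ) : ℂ) * d = ((x - s : ℝ) : ℂ) * (z * d) by ring]
    exact norm_cexp_mul_le_one h
  unfold K1ker
  split_ifs with hlj hsx hxs
  · exact hexp _ (mul_nonpos_of_nonneg_of_nonpos (sub_nonneg.2 hsx)
      (re_mul_omg_pow_sub_nonpos him hsec hlj))
  · simp
  · rw [norm_neg]
    refine hexp _ (mul_nonpos_of_nonpos_of_nonneg (sub_nonpos.2 hxs) ?_)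
    rcases (not_lt.1 hlj).eq_or_lt with hjl | hjl
    · simp [Fin.ext hjl]
    · rw [← neg_sub, mul_neg, neg_re, neg_nonneg]
      exact re_mul_omg_pow_sub_nonpos him hsec hjl
  · simp

lemma one_le_norm_cpow_one_third {lam : ℂ} (h : 1 < ‖lam‖) : 1 ≤ ‖lam ^ (1 / 3 : ℂ)‖ := by
  have : (1 / 3 : ℂ) = ((1 / 3 : ℝ) : ℂ) := by push_cast; ring
  rw [this, norm_cpow_real]
  exact Real.one_le_rpow h.le (by norm_num)

lemma cpow_one_third_mem_sector {lam : ℂ} (h : 0 ≤ lam.im) :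
    0 ≤ (lam ^ (1 / 3 : ℂ)).im ∧ √3 * (lam ^ (1 / 3 : ℂ)).im ≤ 3 * (lam ^ (1 / 3 : ℂ)).re := by
  rcases eq_or_ne lam 0 with rfl | hlam
  · simp
  set φ := lam.arg / 3
  have hφ0 : 0 ≤ φ := by have := arg_nonneg_iff.2 h; positivity
  have hφ : φ ≤ Real.pi / 3 := by have := arg_le_pi lam; simp only [φ]; linarith
  have hw : lam ^ (1 / 3 : ℂ) = exp (log lam * (1 / 3)) := cpow_def_of_ne_zero hlam _
  have hwre : (log lam * (1 / 3)).re = Real.log ‖lam‖ / 3 := by simp [log_re]; ring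
  have hwim : (log lam * (1 / 3)).im = φ := by simp [log_im, φ]; ring
  have hcos : 1 / 2 ≤ Real.cos φ := by
    rw [← Real.cos_pi_div_three]
    exact Real.cos_le_cos_of_nonneg_of_le_pi hφ0 (by linarith [Real.pi_pos]) hφ
  have hsin : Real.sin φ ≤ √3 / 2 := by
    rw [← Real.sin_pi_div_three]
    exact Real.sin_le_sin_of_le_of_le_pi_div_two (by linarith [Real.pi_pos]) (by linarith) hφ
  have hsin0 : 0 ≤ Real.sin φ := Real.sin_nonneg_of_nonneg_of_le_pi hφ0 (by linarith [Real.pi_pos])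
  have hr := Real.exp_pos (Real.log ‖lam‖ / 3)
  have h3 : √3 * √3 = 3 := Real.mul_self_sqrt (by norm_num)
  rw [hw, exp_re, exp_im, hwre, hwim]
  constructor
  · positivity
  · nlinarith [mul_le_mul_of_nonneg_left hsin hr.le, mul_le_mul_of_nonneg_left hcos hr.le]

lemma Function.Periodic.intervalIntegral_zero_natCast {f : ℝ → ℝ} (hf : Function.Periodic f 1)
    (h01 : IntervalIntegrable f volume 0 1) (n : ℕ) :
    ∫ x in (0:ℝ)..n, f x = n * ∫ x in (0:ℝ)..1, f x := by
  simpa using hf.intervalIntegral_add_zsmul_eq n 0 (hf.intervalIntegrable₀ one_ne_zero h01)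

/-- Integrating `2 m |f| ≤ f² + m²` with `m = ∫₀¹ |f|` gives `m² ≤ ∫₀¹ f²`. -/
lemma intervalIntegral_abs_le_sqrt_sq {f : ℝ → ℝ} (hf : IntervalIntegrable f volume 0 1)
    (hf2 : IntervalIntegrable (fun x => f x ^ 2) volume 0 1) :
    ∫ x in (0:ℝ)..1, |f x| ≤ √(∫ x in (0:ℝ)..1, f x ^ 2) := by
  set m := ∫ x in (0:ℝ)..1, |f x|
  have hpt : ∀ x, 2 * m * |f x| ≤ f x ^ 2 + m ^ 2 := fun x => by
    nlinarith [sq_nonneg (|f x| - m), sq_abs (f x)]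
  have hint := intervalIntegral.integral_mono_on zero_le_one
    (hf.abs.const_mul (2 * m)) (hf2.add intervalIntegrable_const) fun x _ => hpt x
  rw [intervalIntegral.integral_const_mul, intervalIntegral.integral_add hf2
    intervalIntegrable_const] at hint
  simp only [intervalIntegral.integral_const, sub_zero, one_smul] at hint
  exact (le_abs_self m).trans (Real.abs_le_sqrt (by nlinarith))

lemma intervalIntegral_abs_add_abs_le {p q : ℝ → ℝ} (hp : Function.Periodic p 1)
    (hq : Function.Periodic q 1) (hp1 : IntervalIntegrable p volume 0 1)
    (hq1 : IntervalIntegrable q volume 0 1)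
    (hp2 : IntervalIntegrable (fun x => p x ^ 2) volume 0 1)
    (hq2 : IntervalIntegrable (fun x => q x ^ 2) volume 0 1) (n : ℕ) :
    ∫ s in (0:ℝ)..n, |p s| + |q s|
      ≤ 2 * n * √((∫ x in (0:ℝ)..1, p x ^ 2) + ∫ x in (0:ℝ)..1, q x ^ 2) := by
  have hρ : Function.Periodic (fun s => |p s| + |q s|) 1 := fun s => by simp [hp s, hq s]
  have hsq : ∀ {f : ℝ → ℝ}, 0 ≤ ∫ x in (0:ℝ)..1, f x ^ 2 := fun {f} =>
    intervalIntegral.integral_nonneg zero_le_one fun x _ => sq_nonneg (f x)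
  have hpu := (intervalIntegral_abs_le_sqrt_sq hp1 hp2).trans
    (Real.sqrt_le_sqrt (le_add_of_nonneg_right (hsq (f := q))))
  have hqu := (intervalIntegral_abs_le_sqrt_sq hq1 hq2).trans
    (Real.sqrt_le_sqrt (le_add_of_nonneg_left (hsq (f := p))))
  rw [hρ.intervalIntegral_zero_natCast (hp1.abs.add hq1.abs),
    intervalIntegral.integral_add hp1.abs hq1.abs, mul_comm 2 (n : ℝ), mul_assoc]
  exact mul_le_mul_of_nonneg_left (by linarith) n.cast_nonneg

lemma NormedRing.norm_inverse_sub_one_le {R : Type*} [NormedRing R] [CompleteSpace R]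
    [NormOneClass R] {a : R} {β : ℝ} (h : ‖a - 1‖ ≤ β) (hβ : β < 1) :
    IsUnit a ∧ ‖Ring.inverse a - 1‖ ≤ β / (1 - β) := by
  have hu : IsUnit a :=
    sub_sub_self (1 : R) a ▸ (Units.oneSub (1 - a) (by rw [norm_sub_rev]; linarith)).isUnit
  refine ⟨hu, ?_⟩
  have hb : Ring.inverse a - 1 = Ring.inverse a * (1 - a) := by
    rw [mul_sub, mul_one, Ring.inverse_mul_cancel a hu]
  have : ‖Ring.inverse a - 1‖ ≤ (‖Ring.inverse a - 1‖ + 1) * β := calc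
    ‖Ring.inverse a - 1‖ ≤ ‖Ring.inverse a‖ * ‖1 - a‖ := hb ▸ norm_mul_le _ _
    _ ≤ (‖Ring.inverse a - 1‖ + 1) * β := by
      rw [norm_sub_rev]
      gcongr
      simpa using norm_add_le (Ring.inverse a - 1) 1
  rw [le_div_iff₀ (by linarith)]
  linarith

section L2
open scoped Matrix.Norms.L2Operator

lemma Matrix.l2_opNorm_le_sum_norm {n 𝕜 : Type*} [Fintype n] [DecidableEq n] [RCLike 𝕜]
    (A : Matrix n n 𝕜) : ‖A‖ ≤ ∑ i, ∑ j, ‖A i j‖ := by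
  rw [cstar_norm_def]
  refine ContinuousLinearMap.opNorm_le_bound _ (by positivity) fun v => ?_
  have hAv : toEuclideanCLM (n := n) (𝕜 := 𝕜) A v
      = ∑ i, ∑ j, EuclideanSpace.single i (A i j * v j) := by
    ext k
    simp [ofLp_toEuclideanCLM, mulVec, dotProduct, Pi.single_apply]
  rw [hAv, Finset.sum_mul]
  refine (norm_sum_le _ _).trans (Finset.sum_le_sum fun i _ => ?_)
  rw [Finset.sum_mul]
  refine (norm_sum_le _ _).trans (Finset.sum_le_sum fun j _ => ?_)
  rw [PiLp.norm_single, norm_mul]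
  gcongr
  exact PiLp.norm_apply_le v j

variable {A : Matrix (Fin 3) (Fin 3) ℂ} {β : ℝ}

lemma opN_le_add_one (h : opN (A - 1) ≤ β) : opN A ≤ β + 1 := by
  change ‖A‖ ≤ β + 1
  calc ‖A‖ ≤ ‖A - 1‖ + ‖(1 : Matrix (Fin 3) (Fin 3) ℂ)‖ := norm_le_norm_sub_add A 1
    _ ≤ β + 1 := by rw [norm_one]; gcongr; exact h

lemma isUnit_and_opN_inv_sub_one_le (h : opN (A - 1) ≤ β) (hβ : β ≤ 1 / 2) :
    IsUnit A ∧ opN (A⁻¹ - 1) ≤ 2 * β := by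
  obtain ⟨hu, hinv⟩ := NormedRing.norm_inverse_sub_one_le (a := A) h (by linarith)
  have hβ0 : 0 ≤ β := (norm_nonneg _).trans h
  refine ⟨hu, ?_⟩
  change ‖A⁻¹ - 1‖ ≤ 2 * β
  rw [nonsing_inv_eq_ringInverse]
  exact hinv.trans ((div_le_iff₀ (by linarith)).2 (by nlinarith))

end L2

open scoped Matrix.Norms.Elementwise in
lemma opN_le_nine_mul_norm (A : Matrix (Fin 3) (Fin 3) ℂ) : opN A ≤ 9 * ‖A‖ := by
  calc opN A ≤ ∑ i, ∑ j, ‖A i j‖ := Matrix.l2_opNorm_le_sum_norm A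
    _ ≤ ∑ _i : Fin 3, ∑ _j : Fin 3, ‖A‖ := by gcongr; exact norm_entry_le_entrywise_sup_norm A
    _ = 9 * ‖A‖ := by simp; ring

lemma norm_Om1_apply (l k : Fin 3) : ‖Om1 l k‖ = 1 := by
  fin_cases l <;> fin_cases k <;> simp [Om1, norm_omg]

lemma norm_Om2_apply (l k : Fin 3) : ‖Om2 l k‖ = 1 := by
  fin_cases l <;> fin_cases k <;> simp [Om2, norm_omg]

section F1m
variable {p q : ℝ → ℝ} {z : ℂ}

lemma norm_F1m_apply_le (hz : 1 ≤ ‖z‖) (s : ℝ) (l k : Fin 3) :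
    ‖F1m p q z s l k‖ ≤ (|p s| + |q s|) / 3 := by
  have hq : |q s| / (3 * ‖z‖) ≤ |q s| / 3 :=
    div_le_div_of_nonneg_left (abs_nonneg _) (by norm_num) (by linarith)
  calc ‖F1m p q z s l k‖ ≤ ‖-(p s : ℂ) / 3 * Om1 l k‖ + ‖-(q s : ℂ) / (3 * z) * Om2 l k‖ :=
        norm_add_le _ _
    _ = |p s| / 3 + |q s| / (3 * ‖z‖) := by
        simp [norm_Om1_apply, norm_Om2_apply]
    _ ≤ (|p s| + |q s|) / 3 := by linarith

open scoped Matrix.Norms.Elementwise in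
lemma norm_F1m_mul_apply_le (hz : 1 ≤ ‖z‖) (s : ℝ) (A : Matrix (Fin 3) (Fin 3) ℂ)
    (l j : Fin 3) : ‖(F1m p q z s * A) l j‖ ≤ (|p s| + |q s|) * ‖A‖ := by
  rw [mul_apply]
  calc ‖∑ k, F1m p q z s l k * A k j‖ ≤ ∑ k : Fin 3, (|p s| + |q s|) / 3 * ‖A‖ :=
        (norm_sum_le _ _).trans <| Finset.sum_le_sum fun k _ => (norm_mul _ _).trans_le <|
          mul_le_mul (norm_F1m_apply_le hz s l k) (norm_entry_le_entrywise_sup_norm A)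
            (norm_nonneg _) (by positivity)
    _ = (|p s| + |q s|) * ‖A‖ := by simp; ring

lemma aestronglyMeasurable_F1m {μ : Measure ℝ} (hp : AEStronglyMeasurable p μ)
    (hq : AEStronglyMeasurable q μ) : AEStronglyMeasurable (F1m p q z) μ := by
  unfold F1m
  fun_prop
end F1m

section BirkhoffIntegral
open scoped Matrix.Norms.Elementwise Interval

variable {p q : ℝ → ℝ} {z : ℂ} {T : ℝ}

/-- The matrix `(K₁X)(x)`. -/
noncomputable def birkhoffIntegral (p q : ℝ → ℝ) (z : ℂ) (T : ℝ) (X : ℝ → Matrix (Fin 3) (Fin 3) ℂ)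
    (x : ℝ) : Matrix (Fin 3) (Fin 3) ℂ :=
  Matrix.of fun l j => ∫ s in (0:ℝ)..T, K1ker z l j x s * (F1m p q z s * X s) l j

lemma measurable_K1ker (z : ℂ) (l j : Fin 3) (x : ℝ) : Measurable (K1ker z l j x) := by
  unfold K1ker
  split_ifs
  · exact Measurable.ite measurableSet_Iic (by fun_prop) measurable_const
  · exact Measurable.ite measurableSet_Ici (by fun_prop) measurable_const

lemma continuousAt_K1ker (z : ℂ) (l j : Fin 3) {x₀ s : ℝ} (h : s ≠ x₀) :
    ContinuousAt (fun x => K1ker z l j x s) x₀ := by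
  have hE : ∀ d : ℂ, Continuous fun x : ℝ => cexp (z * ((x - s : ℝ) : ℂ) * d) :=
    fun d => by fun_prop
  unfold K1ker
  rcases h.lt_or_gt with hs | hs
  · have hev : ∀ᶠ x in nhds x₀, s < x := Ioi_mem_nhds hs
    split_ifs
    · exact (hE _).continuousAt.congr (hev.mono fun x hx => (if_pos hx.le).symm)
    · exact continuousAt_const.congr (hev.mono fun x hx => (if_neg (not_le.2 hx)).symm)
  · have hev : ∀ᶠ x in nhds x₀, x < s := Iio_mem_nhds hs
    split_ifs
    · exact continuousAt_const.congr (hev.mono fun x hx => (if_neg (not_le.2 hx)).symm)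
    · exact (hE _).neg.continuousAt.congr (hev.mono fun x hx => (if_pos hx.le).symm)

variable {X Y : ℝ → Matrix (Fin 3) (Fin 3) ℂ} {S : ℝ}

lemma norm_K1ker_mul_F1m_mul_apply_le (hz : 1 ≤ ‖z‖)
    (hK : ∀ l j x s, ‖K1ker z l j x s‖ ≤ 1) (hX : ∀ s, ‖X s‖ ≤ S) (l j : Fin 3) (x s : ℝ) :
    ‖K1ker z l j x s * (F1m p q z s * X s) l j‖ ≤ (|p s| + |q s|) * S := by
  rw [norm_mul]
  calc ‖K1ker z l j x s‖ * ‖(F1m p q z s * X s) l j‖ ≤ 1 * ((|p s| + |q s|) * ‖X s‖) :=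
        mul_le_mul (hK l j x s) (norm_F1m_mul_apply_le hz s _ l j) (norm_nonneg _) zero_le_one
    _ ≤ (|p s| + |q s|) * S := by rw [one_mul]; gcongr; exact hX s

lemma intervalIntegrable_K1ker_mul_F1m_mul_apply (hz : 1 ≤ ‖z‖)
    (hK : ∀ l j x s, ‖K1ker z l j x s‖ ≤ 1) (hp : IntervalIntegrable p volume 0 T)
    (hq : IntervalIntegrable q volume 0 T) (hXm : AEStronglyMeasurable X (volume.restrict (Ι 0 T)))
    (hX : ∀ s, ‖X s‖ ≤ S) (l j : Fin 3) (x : ℝ) :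
    IntervalIntegrable (fun s => K1ker z l j x s * (F1m p q z s * X s) l j) volume 0 T := by
  refine ((hp.abs.add hq.abs).mul_const S).mono_fun' ?_ (.of_forall fun s =>
    norm_K1ker_mul_F1m_mul_apply_le hz hK hX l j x s)
  have hF := aestronglyMeasurable_F1m (z := z) hp.def'.aestronglyMeasurable
    hq.def'.aestronglyMeasurable
  exact (measurable_K1ker z l j x).aestronglyMeasurable.mul
    ((continuous_id.matrix_elem l j).comp_aestronglyMeasurable (hF.mul hXm))

lemma norm_birkhoffIntegral_le (hT : 0 ≤ T) (hz : 1 ≤ ‖z‖)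
    (hK : ∀ l j x s, ‖K1ker z l j x s‖ ≤ 1) (hp : IntervalIntegrable p volume 0 T)
    (hq : IntervalIntegrable q volume 0 T) (hX : ∀ s, ‖X s‖ ≤ S) (x : ℝ) :
    ‖birkhoffIntegral p q z T X x‖ ≤ (∫ s in (0:ℝ)..T, |p s| + |q s|) * S := by
  have hρ : IntervalIntegrable (fun s => |p s| + |q s|) volume 0 T := hp.abs.add hq.abs
  have hS : 0 ≤ S := (norm_nonneg _).trans (hX 0)
  refine (norm_le_iff (mul_nonneg (intervalIntegral.integral_nonneg hT fun s _ =>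
    by positivity) hS)).2 fun l j => ?_
  rw [← intervalIntegral.integral_mul_const]
  exact intervalIntegral.norm_integral_le_of_norm_le hT (.of_forall fun s _ =>
    norm_K1ker_mul_F1m_mul_apply_le hz hK hX l j x s) (hρ.mul_const S)

lemma birkhoffIntegral_sub (hz : 1 ≤ ‖z‖)
    (hK : ∀ l j x s, ‖K1ker z l j x s‖ ≤ 1) (hp : IntervalIntegrable p volume 0 T)
    (hq : IntervalIntegrable q volume 0 T) (hXm : AEStronglyMeasurable X (volume.restrict (Ι 0 T)))
    (hYm : AEStronglyMeasurable Y (volume.restrict (Ι 0 T)))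
    {S' : ℝ} (hX : ∀ s, ‖X s‖ ≤ S) (hY : ∀ s, ‖Y s‖ ≤ S') (x : ℝ) :
    birkhoffIntegral p q z T X x - birkhoffIntegral p q z T Y x
      = birkhoffIntegral p q z T (X - Y) x := by
  ext l j
  simp only [birkhoffIntegral, Matrix.sub_apply, of_apply, Pi.sub_apply, mul_sub]
  exact (intervalIntegral.integral_sub
    (intervalIntegrable_K1ker_mul_F1m_mul_apply hz hK hp hq hXm hX l j x)
    (intervalIntegrable_K1ker_mul_F1m_mul_apply hz hK hp hq hYm hY l j x)).symm

lemma continuous_birkhoffIntegral (hz : 1 ≤ ‖z‖)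
    (hK : ∀ l j x s, ‖K1ker z l j x s‖ ≤ 1) (hp : IntervalIntegrable p volume 0 T)
    (hq : IntervalIntegrable q volume 0 T) (hXm : AEStronglyMeasurable X (volume.restrict (Ι 0 T)))
    (hX : ∀ s, ‖X s‖ ≤ S) : Continuous (birkhoffIntegral p q z T X) := by
  refine continuous_pi fun l => continuous_pi fun j => continuous_iff_continuousAt.2 fun x₀ => ?_
  refine intervalIntegral.continuousAt_of_dominated_interval
    (.of_forall fun x => (intervalIntegrable_K1ker_mul_F1m_mul_apply hz hK hp hq hXm hX l j
      x).def'.aestronglyMeasurable)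
    (.of_forall fun x => .of_forall fun s _ => norm_K1ker_mul_F1m_mul_apply_le hz hK hX l j x s)
    ((hp.abs.add hq.abs).mul_const S) ?_
  filter_upwards [(Set.countable_singleton x₀).ae_notMem volume] with s hs _
  exact (continuousAt_K1ker z l j hs).mul continuousAt_const

lemma birkhoffIntegral_congr (h : EqOn X Y (uIcc 0 T)) :
    birkhoffIntegral p q z T X = birkhoffIntegral p q z T Y := by
  ext x l j
  exact intervalIntegral.integral_congr fun s hs => by simp only [h hs]

lemma birkhoffIntegral_apply_eq_zero {l j : Fin 3} {x : ℝ} (hT : 0 ≤ T)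
    (h : ∀ s ∈ Ioo 0 T, K1ker z l j x s = 0) : birkhoffIntegral p q z T X x l j = 0 := by
  rw [birkhoffIntegral, of_apply, intervalIntegral.integral_of_le hT,
    integral_Ioc_eq_integral_Ioo]
  exact setIntegral_eq_zero_of_forall_eq_zero fun s hs => by rw [h s hs, zero_mul]

end BirkhoffIntegral

section Solution
open scoped Matrix.Norms.Elementwise

variable {p q : ℝ → ℝ} {z : ℂ} {N : ℕ} {X : ℝ → Matrix (Fin 3) (Fin 3) ℂ}

lemma solvesBirkhoff1_iff : SolvesBirkhoff1 p q z N X ↔ ContinuousOn X (Icc 0 N) ∧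
    ∀ x ∈ Icc (0:ℝ) N, X x = 1 + z⁻¹ • birkhoffIntegral p q z N X x := by
  refine and_congr (continuousOn_pi.trans (forall_congr' fun _ => continuousOn_pi)).symm
    (forall₂_congr fun x _ => ?_)
  simp only [← Matrix.ext_iff, Matrix.add_apply, Matrix.smul_apply, smul_eq_mul,
    birkhoffIntegral, of_apply]

lemma SolvesBirkhoff1.apply_zero_of_lt (hX : SolvesBirkhoff1 p q z N X) {l j : Fin 3}
    (hlj : (l : ℕ) < j) : X 0 l j = 0 := by
  have hvan : birkhoffIntegral p q z N X 0 l j = 0 :=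
    birkhoffIntegral_apply_eq_zero N.cast_nonneg fun s hs => by
      simp [K1ker, hlj, not_le.2 hs.1]
  rw [(solvesBirkhoff1_iff.1 hX).2 0 ⟨le_rfl, N.cast_nonneg⟩]
  simp [hvan, one_apply_ne (Fin.ne_of_val_ne hlj.ne)]

lemma SolvesBirkhoff1.apply_natCast_of_not_lt (hX : SolvesBirkhoff1 p q z N X) {l j : Fin 3}
    (hlj : ¬ (l : ℕ) < j) : X N l j = (1 : Matrix (Fin 3) (Fin 3) ℂ) l j := by
  have hvan : birkhoffIntegral p q z N X N l j = 0 :=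
    birkhoffIntegral_apply_eq_zero N.cast_nonneg fun s hs => by
      simp [K1ker, hlj, not_le.2 hs.2]
  rw [(solvesBirkhoff1_iff.1 hX).2 N ⟨N.cast_nonneg, le_rfl⟩]
  simp [hvan]

end Solution

section BirkhoffMap
open scoped Matrix.Norms.Elementwise Interval

variable {p q : ℝ → ℝ} {z : ℂ} {N : ℕ}

/- Continuous matrix functions on `[0, N]` are taken with values in `Fin 3 → Fin 3 → ℂ`, whose sup
norm is the entrywise norm: `C(_, Matrix _ _ ℂ)` gets no norm, because the topology instance of
`Matrix` is not syntactically the one of the scoped entrywise norm. -/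
noncomputable def extendIcc (N : ℕ) (f : C(Icc (0:ℝ) N, Fin 3 → Fin 3 → ℂ)) (s : ℝ) :
    Matrix (Fin 3) (Fin 3) ℂ :=
  Matrix.of (IccExtend N.cast_nonneg f s)

lemma extendIcc_of_mem (f : C(Icc (0:ℝ) N, Fin 3 → Fin 3 → ℂ)) {s : ℝ} (hs : s ∈ Icc (0:ℝ) N) :
    extendIcc N f s = Matrix.of (f ⟨s, hs⟩) :=
  congrArg Matrix.of (IccExtend_of_mem _ _ hs)

lemma norm_extendIcc_sub_le (f g : C(Icc (0:ℝ) N, Fin 3 → Fin 3 → ℂ)) (s : ℝ) :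
    ‖extendIcc N f s - extendIcc N g s‖ ≤ dist f g :=
  (dist_eq_norm _ _).symm.trans_le (ContinuousMap.dist_apply_le_dist _)

lemma norm_extendIcc_le (f : C(Icc (0:ℝ) N, Fin 3 → Fin 3 → ℂ)) (s : ℝ) :
    ‖extendIcc N f s‖ ≤ ‖f‖ :=
  f.norm_coe_le_norm _

lemma exists_extendIcc_eqOn {Y : ℝ → Matrix (Fin 3) (Fin 3) ℂ} (hY : ContinuousOn Y (Icc 0 N)) :
    ∃ f : C(Icc (0:ℝ) N, Fin 3 → Fin 3 → ℂ), EqOn (extendIcc N f) Y (Icc 0 N) :=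
  ⟨⟨fun t => Y t, continuous_matrixOf.1 (continuousOn_iff_continuous_domRestrict.1 hY)⟩,
    fun _ hs => extendIcc_of_mem _ hs⟩

lemma continuous_extendIcc (f : C(Icc (0:ℝ) N, Fin 3 → Fin 3 → ℂ)) :
    Continuous (extendIcc N f) :=
  continuous_matrixOf.2 (ContinuousMap.IccExtend _ f).continuous

lemma aestronglyMeasurable_extendIcc (f : C(Icc (0:ℝ) N, Fin 3 → Fin 3 → ℂ)) (μ : Measure ℝ) :
    AEStronglyMeasurable (extendIcc N f) μ :=
  (continuous_matrixOf.2 continuous_id).comp_aestronglyMeasurable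
    (ContinuousMap.IccExtend _ f).continuous.aestronglyMeasurable

lemma SolvesBirkhoff1.congr {X Y : ℝ → Matrix (Fin 3) (Fin 3) ℂ} (hX : SolvesBirkhoff1 p q z N X)
    (h : EqOn X Y (Icc 0 N)) : SolvesBirkhoff1 p q z N Y := by
  obtain ⟨hXc, hXeq⟩ := solvesBirkhoff1_iff.1 hX
  have hB : birkhoffIntegral p q z N X = birkhoffIntegral p q z N Y :=
    birkhoffIntegral_congr (by rwa [uIcc_of_le N.cast_nonneg])
  exact solvesBirkhoff1_iff.2 ⟨hXc.congr h.symm, fun x hx => by rw [← h hx, hXeq x hx, hB]⟩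

variable (hz : 1 ≤ ‖z‖) (hK : ∀ l j x s, ‖K1ker z l j x s‖ ≤ 1)
  (hp : IntervalIntegrable p volume 0 N) (hq : IntervalIntegrable q volume 0 N)

noncomputable def birkhoffMap (f : C(Icc (0:ℝ) N, Fin 3 → Fin 3 → ℂ)) :
    C(Icc (0:ℝ) N, Fin 3 → Fin 3 → ℂ) :=
  ⟨fun t => (1 + z⁻¹ • birkhoffIntegral p q z N (extendIcc N f) t : Matrix (Fin 3) (Fin 3) ℂ),
    continuous_matrixOf.1 <| (((continuous_birkhoffIntegral hz hK hp hq
      (aestronglyMeasurable_extendIcc f _) (norm_extendIcc_le f)).const_smul z⁻¹).const_add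
        1).comp continuous_subtype_val⟩

lemma birkhoffMap_apply (f : C(Icc (0:ℝ) N, Fin 3 → Fin 3 → ℂ)) (t : Icc (0:ℝ) N) :
    Matrix.of (birkhoffMap hz hK hp hq f t) = 1 + z⁻¹ • birkhoffIntegral p q z N (extendIcc N f) t :=
  rfl

lemma dist_birkhoffMap_le (f g : C(Icc (0:ℝ) N, Fin 3 → Fin 3 → ℂ)) :
    dist (birkhoffMap hz hK hp hq f) (birkhoffMap hz hK hp hq g)
      ≤ (∫ s in (0:ℝ)..N, |p s| + |q s|) / ‖z‖ * dist f g := by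
  have hM : 0 ≤ ∫ s in (0:ℝ)..N, |p s| + |q s| :=
    intervalIntegral.integral_nonneg N.cast_nonneg fun s _ => by positivity
  refine (ContinuousMap.dist_le (by positivity)).2 fun t => ?_
  rw [dist_eq_norm]
  change ‖Matrix.of (birkhoffMap hz hK hp hq f t) - Matrix.of (birkhoffMap hz hK hp hq g t)‖ ≤ _
  rw [birkhoffMap_apply, birkhoffMap_apply, add_sub_add_left_eq_sub, ← smul_sub,
    birkhoffIntegral_sub hz hK hp hq (aestronglyMeasurable_extendIcc f _)
      (aestronglyMeasurable_extendIcc g _) (norm_extendIcc_le f) (norm_extendIcc_le g),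
    norm_smul, norm_inv, div_mul_eq_mul_div, div_eq_inv_mul]
  gcongr
  exact norm_birkhoffIntegral_le N.cast_nonneg hz hK hp hq (norm_extendIcc_sub_le f g) _

lemma contractingWith_birkhoffMap (hM : (∫ s in (0:ℝ)..N, |p s| + |q s|) ≤ ‖z‖ / 2) :
    ContractingWith (1 / 2) (birkhoffMap hz hK hp hq) := by
  have hκ : (∫ s in (0:ℝ)..N, |p s| + |q s|) / ‖z‖ ≤ 1 / 2 := by
    rw [div_le_iff₀ (one_pos.trans_le hz)]; linarith
  refine ⟨by norm_num, LipschitzWith.of_dist_le_mul fun f g =>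
    (dist_birkhoffMap_le hz hK hp hq f g).trans ?_⟩
  push_cast
  gcongr

lemma isFixedPt_birkhoffMap_iff (f : C(Icc (0:ℝ) N, Fin 3 → Fin 3 → ℂ)) :
    Function.IsFixedPt (birkhoffMap hz hK hp hq) f ↔ SolvesBirkhoff1 p q z N (extendIcc N f) := by
  rw [solvesBirkhoff1_iff]
  refine ⟨fun hf => ⟨(continuous_extendIcc f).continuousOn, fun x hx => ?_⟩, fun hf => ?_⟩
  · rw [extendIcc_of_mem f hx, ← birkhoffMap_apply hz hK hp hq f ⟨x, hx⟩, hf.eq]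
  · ext t : 1
    exact ((birkhoffMap_apply hz hK hp hq f t).trans (hf.2 t t.2).symm).trans
      (extendIcc_of_mem f t.2)

lemma dist_birkhoffMap_one_le (f : C(Icc (0:ℝ) N, Fin 3 → Fin 3 → ℂ)) {S : ℝ}
    (hf : ∀ s, ‖extendIcc N f s‖ ≤ S) :
    dist (birkhoffMap hz hK hp hq f) (ContinuousMap.const _ (Matrix.of.symm 1))
      ≤ (∫ s in (0:ℝ)..N, |p s| + |q s|) / ‖z‖ * S := by
  have hM : 0 ≤ ∫ s in (0:ℝ)..N, |p s| + |q s| :=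
    intervalIntegral.integral_nonneg N.cast_nonneg fun s _ => by positivity
  have hS : 0 ≤ S := (norm_nonneg _).trans (hf 0)
  refine (ContinuousMap.dist_le (by positivity)).2 fun t => ?_
  rw [dist_eq_norm]
  change ‖Matrix.of (birkhoffMap hz hK hp hq f t) - 1‖ ≤ _
  rw [birkhoffMap_apply, add_sub_cancel_left, norm_smul, norm_inv, div_mul_eq_mul_div,
    div_eq_inv_mul]
  gcongr
  exact norm_birkhoffIntegral_le N.cast_nonneg hz hK hp hq hf _

end BirkhoffMap

section Existence
open scoped Matrix.Norms.Elementwise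

variable {p q : ℝ → ℝ} {z : ℂ} {N : ℕ}

theorem exists_unique_solvesBirkhoff1 (hz : 1 ≤ ‖z‖) (hK : ∀ l j x s, ‖K1ker z l j x s‖ ≤ 1)
    (hp : IntervalIntegrable p volume 0 N) (hq : IntervalIntegrable q volume 0 N)
    (hM : (∫ s in (0:ℝ)..N, |p s| + |q s|) ≤ ‖z‖ / 2) :
    ∃ X, SolvesBirkhoff1 p q z N X ∧
      (∀ Y, SolvesBirkhoff1 p q z N Y → ∀ x ∈ Icc (0:ℝ) N, Y x = X x) ∧
      ∀ x ∈ Icc (0:ℝ) N, opN (X x - 1) ≤ 18 * ((∫ s in (0:ℝ)..N, |p s| + |q s|) / ‖z‖) := by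
  have hΦ := contractingWith_birkhoffMap hz hK hp hq hM
  obtain ⟨F, hF⟩ : ∃ F, Function.IsFixedPt (birkhoffMap hz hK hp hq) F :=
    ⟨_, hΦ.fixedPoint_isFixedPt⟩
  refine ⟨extendIcc N F, (isFixedPt_birkhoffMap_iff hz hK hp hq F).1 hF,
    fun Y hY x hx => ?_, fun x hx => ?_⟩
  · obtain ⟨G, hG⟩ := exists_extendIcc_eqOn (solvesBirkhoff1_iff.1 hY).1
    have hGfix := (isFixedPt_birkhoffMap_iff hz hK hp hq G).2 (hY.congr hG.symm)
    rw [← hG hx, hΦ.fixedPoint_unique' hGfix hF]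
  · set I := ContinuousMap.const (Icc (0:ℝ) N) (Matrix.of.symm (1 : Matrix (Fin 3) (Fin 3) ℂ))
    have hI := dist_birkhoffMap_one_le hz hK hp hq I (S := 1) fun s => norm_one.le
    have hX1 : ‖extendIcc N F x - 1‖ ≤ 2 * ((∫ s in (0:ℝ)..N, |p s| + |q s|) / ‖z‖) := calc
      ‖extendIcc N F x - 1‖ = dist (F ⟨x, hx⟩) (I ⟨x, hx⟩) := by
          rw [extendIcc_of_mem F hx, dist_eq_norm]; rfl
      _ ≤ dist I F := dist_comm (F ⟨x, hx⟩) (I ⟨x, hx⟩) ▸ ContinuousMap.dist_apply_le_dist _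
      _ ≤ dist I (birkhoffMap hz hK hp hq I) / (1 - 1 / 2) := by
          simpa using hΦ.dist_le_of_fixedPoint I hF
      _ ≤ 2 * ((∫ s in (0:ℝ)..N, |p s| + |q s|) / ‖z‖) := by
          rw [dist_comm]; norm_num; linarith
    linarith [opN_le_nine_mul_norm (extendIcc N F x - 1)]

end Existence

/-- There are absolute constants `c, C > 0` such that for every `N ≥ 1`,
all real-valued 1-periodic `p, q ∈ L²(𝕋)` with `‖u‖ ≤ c/N`, and every `λ` with
`Im λ ≥ 0`, `|λ| > 1`, `z = λ^{1/3}`, the Birkhoff integral equation has a unique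
continuous solution `X₁` on `[0,N]`, with the stated boundary values, the bounds
`‖X₁‖ ≤ 2`, `‖X₁ − 1₃‖ ≤ CN‖u‖/|z|`, invertibility of `X₁(x)`, and
`‖X₁⁻¹ − 1₃‖ ≤ CN‖u‖/|z|`. -/
theorem birkhoff_equation_first :
    ∃ c > (0:ℝ), ∃ C > (0:ℝ), ∀ N : ℕ, 0 < N →
      ∀ p q : ℝ → ℝ, Function.Periodic p 1 → Function.Periodic q 1 →
      IntervalIntegrable p volume 0 1 → IntervalIntegrable q volume 0 1 →
      IntervalIntegrable (fun x => p x ^ 2) volume 0 1 →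
      IntervalIntegrable (fun x => q x ^ 2) volume 0 1 →
      Real.sqrt ((∫ x in (0:ℝ)..1, p x ^ 2) + ∫ x in (0:ℝ)..1, q x ^ 2) ≤ c / N →
      ∀ lam : ℂ, 0 ≤ lam.im → 1 < ‖lam‖ →
      ∀ z : ℂ, z = lam ^ ((1:ℂ)/3) →
      ∃ X : ℝ → Matrix (Fin 3) (Fin 3) ℂ,
        SolvesBirkhoff1 p q z N X ∧
        (∀ Y : ℝ → Matrix (Fin 3) (Fin 3) ℂ, SolvesBirkhoff1 p q z N Y →
          ∀ x ∈ Set.Icc (0:ℝ) (N:ℝ), Y x = X x) ∧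
        (∀ l j : Fin 3, (l : ℕ) < (j : ℕ) → X 0 l j = 0 ∧ X (N:ℝ) j l = 0) ∧
        (∀ j : Fin 3, X (N:ℝ) j j = 1) ∧
        (∀ x ∈ Set.Icc (0:ℝ) (N:ℝ), opN (X x) ≤ 2) ∧
        (∀ x ∈ Set.Icc (0:ℝ) (N:ℝ), opN (X x - 1)
          ≤ C * N * Real.sqrt ((∫ x in (0:ℝ)..1, p x ^ 2) + ∫ x in (0:ℝ)..1, q x ^ 2)
              / ‖z‖) ∧
        (∀ x ∈ Set.Icc (0:ℝ) (N:ℝ), IsUnit (X x)) ∧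
        (∀ x ∈ Set.Icc (0:ℝ) (N:ℝ), opN ((X x)⁻¹ - 1)
          ≤ C * N * Real.sqrt ((∫ x in (0:ℝ)..1, p x ^ 2) + ∫ x in (0:ℝ)..1, q x ^ 2)
              / ‖z‖) := by
  refine ⟨1 / 72, by norm_num, 72, by norm_num, fun N hN p q hp hq hp1 hq1 hp2 hq2 hu lam
    hlam hlam1 z hzlam => ?_⟩
  set u := √((∫ x in (0:ℝ)..1, p x ^ 2) + ∫ x in (0:ℝ)..1, q x ^ 2)
  set M := ∫ s in (0:ℝ)..N, |p s| + |q s|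
  have hz : 1 ≤ ‖z‖ := hzlam ▸ one_le_norm_cpow_one_third hlam1
  obtain ⟨him, hsec⟩ := hzlam ▸ cpow_one_third_mem_sector hlam
  have hM0 : 0 ≤ M := intervalIntegral.integral_nonneg N.cast_nonneg fun s _ => by positivity
  have hMu : M ≤ 2 * N * u := intervalIntegral_abs_add_abs_le hp hq hp1 hq1 hp2 hq2 N
  have hNu : N * u ≤ 1 / 72 := by rwa [le_div_iff₀ (by exact_mod_cast hN), mul_comm] at hu
  have hκ : M / ‖z‖ ≤ 1 / 36 := (div_le_self hM0 hz).trans (by linarith)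
  have hκu : 36 * (M / ‖z‖) ≤ 72 * N * u / ‖z‖ := by
    rw [show 72 * N * u / ‖z‖ = 36 * (2 * N * u / ‖z‖) by ring]
    gcongr
  obtain ⟨X, hX, hXuniq, hX1⟩ := exists_unique_solvesBirkhoff1 hz (norm_K1ker_le_one him hsec)
    (hp.intervalIntegrable₀ one_ne_zero (by simpa using hp1) 0 N)
    (hq.intervalIntegrable₀ one_ne_zero (by simpa using hq1) 0 N) (by linarith)
  refine ⟨X, hX, hXuniq, fun l j hlj => ⟨hX.apply_zero_of_lt hlj, ?_⟩, fun j => ?_,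
    fun x hx => ?_, fun x hx => ?_,
    fun x hx => (isUnit_and_opN_inv_sub_one_le (hX1 x hx) (by linarith)).1, fun x hx => ?_⟩
  · rw [hX.apply_natCast_of_not_lt (by omega), one_apply_ne (Fin.ne_of_val_ne (by omega))]
  · rw [hX.apply_natCast_of_not_lt (lt_irrefl _), one_apply_eq]
  · linarith [opN_le_add_one (hX1 x hx)]
  · linarith [hX1 x hx, div_nonneg hM0 (norm_nonneg z)]
  · linarith [(isUnit_and_opN_inv_sub_one_le (hX1 x hx) (by linarith)).2]
end

section
/- For every z ∈ ℂ, with ω = e^{2πi/3}: det [[1,1,1],[e^{ωz}, e^{ω²z}, e^{z}],[e^{2ωz}, e^{2ω²z}, e^{2z}]] = −8i · sin(√3 z/2) · sin(√3 ω z/2) · sin(√3 ω² z/2) = −4i · sin(√3 z/2) · ( cosh(3z/2) − cos(√3 z/2) ). -/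
open Matrix Complex

/-!
The matrix is the Vandermonde matrix of `e^{ωz}, e^{ω²z}, e^z`, so its determinant is the product
of their three differences. Writing `e^a - e^b = 2 e^{(a+b)/2} sinh ((a-b)/2)`, the exponential
prefactors multiply to `e^{(1+ω+ω²)z} = 1`, and since `ω² - ω = -i√3`, `1 - ω = i√3 ω²`,
`1 - ω² = -i√3 ω`, the three `sinh`s become `sin (√3 z/2)`, `sin (√3 ω² z/2)`, `sin (√3 ω z/2)`.
The second form is `2 sin B sin C = cos (B - C) - cos (B + C)` with `B - C = 3iz/2` and
`B + C = -√3 z/2`.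
-/

theorem det_vandermonde_three {R : Type*} [CommRing R] (a b c : R) :
    det !![1, 1, 1; a, b, c; a ^ 2, b ^ 2, c ^ 2] = (b - a) * (c - a) * (c - b) := by
  simp [det_fin_three]
  ring

theorem exp_sub_exp (a b : ℂ) : exp a - exp b = 2 * exp ((a + b) / 2) * sinh ((a - b) / 2) := by
  rw [sinh, mul_div_left_comm, mul_div_cancel_left₀ _ two_ne_zero, sub_mul, ← exp_add, ← exp_add]
  ring_nf

theorem det_exp_of_add_eq_zero {a b c : ℂ} (h : a + b + c = 0) :
    det !![1, 1, 1; exp a, exp b, exp c; exp (2 * a), exp (2 * b), exp (2 * c)]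
      = 8 * sinh ((b - a) / 2) * sinh ((c - a) / 2) * sinh ((c - b) / 2) := by
  have exp_two_mul (u : ℂ) : exp (2 * u) = exp u ^ 2 := by rw [sq, ← exp_add, two_mul]
  have hprod : exp ((b + a) / 2) * exp ((c + a) / 2) * exp ((c + b) / 2) = 1 := by
    rw [← exp_add, ← exp_add, ← exp_zero]
    congr 1
    linear_combination h
  rw [exp_two_mul, exp_two_mul, exp_two_mul, det_vandermonde_three, exp_sub_exp, exp_sub_exp,
    exp_sub_exp]
  linear_combination 8 * sinh ((b - a) / 2) * sinh ((c - a) / 2) * sinh ((c - b) / 2) * hprod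

theorem sqrt_three_sq_complex : (√3 : ℂ) ^ 2 = 3 := by
  rw [← ofReal_pow, Real.sq_sqrt (by norm_num)]
  norm_num

theorem sqrt_three_mul_I_sq : (√3 * I) ^ 2 = -3 := by
  rw [mul_pow, sqrt_three_sq_complex, I_sq]
  norm_num

theorem exp_two_pi_I_div_three : exp (2 * Real.pi * I / 3) = -1 / 2 + √3 / 2 * I := by
  rw [show 2 * Real.pi * I / 3 = ((Real.pi - Real.pi / 3 : ℝ) : ℂ) * I by push_cast; ring,
    exp_mul_I, ← ofReal_cos, ← ofReal_sin, Real.cos_pi_sub, Real.sin_pi_sub,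
    Real.cos_pi_div_three, Real.sin_pi_div_three]
  push_cast; ring

theorem det_exp_cube_roots_eq_sin_mul_sin_mul_sin {ω : ℂ} (z : ℂ)
    (hω : ω = -1 / 2 + √3 / 2 * I) :
    det !![1, 1, 1; exp (ω * z), exp (ω ^ 2 * z), exp z;
        exp (2 * ω * z), exp (2 * ω ^ 2 * z), exp (2 * z)]
      = -8 * I * sin (√3 * z / 2) * sin (√3 * ω * z / 2) * sin (√3 * ω ^ 2 * z / 2) := by
  have hsum : ω * z + ω ^ 2 * z + z = 0 := by
    rw [hω]; linear_combination z / 4 * sqrt_three_mul_I_sq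
  have h₁ : (ω ^ 2 * z - ω * z) / 2 = -(√3 * z / 2) * I := by
    rw [hω]; linear_combination z / 8 * sqrt_three_mul_I_sq
  have h₂ : (z - ω * z) / 2 = (√3 * ω ^ 2 * z / 2) * I := by
    rw [hω]; linear_combination z * (2 - √3 * I) / 8 * sqrt_three_mul_I_sq
  have h₃ : (z - ω ^ 2 * z) / 2 = -(√3 * ω * z / 2) * I := by
    rw [hω]; linear_combination z / 8 * sqrt_three_mul_I_sq
  rw [mul_assoc 2 ω, mul_assoc 2 (ω ^ 2), det_exp_of_add_eq_zero hsum, h₁, h₂, h₃, sinh_mul_I,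
    sinh_mul_I, sinh_mul_I, sin_neg, sin_neg]
  linear_combination
    8 * sin (√3 * z / 2) * sin (√3 * ω * z / 2) * sin (√3 * ω ^ 2 * z / 2) * I * I_sq

/-- For every `z ∈ ℂ`, with `ω = e^{2πi/3}`, the determinant of the
value matrix of the unperturbed fundamental solutions at `x = 0, 1, 2` equals
`−8i sin(√3z/2) sin(√3ωz/2) sin(√3ω²z/2) = −4i sin(√3z/2)(cosh(3z/2) − cos(√3z/2))`. -/
theorem det_phi0 (z ω : ℂ) (hω : ω = Complex.exp (2 * Real.pi * Complex.I / 3)) :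
    Matrix.det !![1, 1, 1;
        Complex.exp (ω * z), Complex.exp (ω ^ 2 * z), Complex.exp z;
        Complex.exp (2 * ω * z), Complex.exp (2 * ω ^ 2 * z), Complex.exp (2 * z)]
      = -8 * Complex.I * Complex.sin ((Real.sqrt 3 : ℂ) * z / 2)
          * Complex.sin ((Real.sqrt 3 : ℂ) * ω * z / 2)
          * Complex.sin ((Real.sqrt 3 : ℂ) * ω ^ 2 * z / 2) ∧
    Matrix.det !![1, 1, 1;
        Complex.exp (ω * z), Complex.exp (ω ^ 2 * z), Complex.exp z;
        Complex.exp (2 * ω * z), Complex.exp (2 * ω ^ 2 * z), Complex.exp (2 * z)]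
      = -4 * Complex.I * Complex.sin ((Real.sqrt 3 : ℂ) * z / 2)
          * (Complex.cosh (3 * z / 2) - Complex.cos ((Real.sqrt 3 : ℂ) * z / 2)) := by
  rw [exp_two_pi_I_div_three] at hω
  have hdet := det_exp_cube_roots_eq_sin_mul_sin_mul_sin z hω
  refine ⟨hdet, hdet.trans ?_⟩
  have hhalf_add : (3 * z / 2 * I + √3 * z / 2) / 2 = -(√3 * ω ^ 2 * z / 2) := by
    rw [hω]
    linear_combination -(z * I / 4) * sqrt_three_sq_complex + z * √3 / 8 * sqrt_three_mul_I_sq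
  have hhalf_sub : (3 * z / 2 * I - √3 * z / 2) / 2 = √3 * ω * z / 2 := by
    rw [hω]; linear_combination -(z * I / 4) * sqrt_three_sq_complex
  rw [← cos_mul_I, cos_sub_cos, hhalf_add, hhalf_sub, sin_neg]
  ring
end

section
/- Let ω = e^{2πi/3} and let z ∈ ℂ satisfy Re(ωz) ≤ Re(ω²z) ≤ Re(z), |e^{(ω−1)z}| ≤ e^{−3/2}, and |e^{(ω²−1)z} − 1| > 1/3. Let 0 ≤ δ ≤ 1/300 and let G ∈ M₃(ℂ) satisfy |G_{jj} − 1| ≤ δ for j = 1,2,3 and |G_{jk}| ≤ δ for j ≠ k. Consider T = (e^{ω^j z} G_{jk})_{j,k=1}^3 and its Gershgorin row discs Γ_j = {τ ∈ ℂ : |τ − e^{ω^j z} G_{jj}| ≤ |e^{ω^j z}|·Σ_{k≠j}|G_{jk}|}. Then Γ₁ ∩ Γ₃ = ∅ and Γ₂ ∩ Γ₃ = ∅; T has exactly one eigenvalue τ₃ (of algebraic multiplicity one) in Γ₃; and |τ₃ − e^{z}| ≤ 3δ·|e^{z}|. If moreover z is real and the characteristic polynomial of T has real coefficients, then τ₃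 is real and τ₃ ≥ e^{z}(1 − 3δ) > 0. -/
open Matrix Complex Polynomial

/-!
Since `|e^{ωz}| ≤ e^{-3/2}|e^z|` and `|e^{ω²z} - e^z| > |e^z|/3`, the third diagonal entry of
`T` lies at distance at least `|e^z|/4` from the other two, while every off-diagonal entry is at
most `ε = δ|e^z|`.

For a `3 × 3` matrix whose off-diagonal entries are at most `ε` and whose diagonal gaps
`α = T₃₃ - T₁₁`, `β = T₃₃ - T₂₂` exceed `10ε`, the divided difference `(χ r - χ r') / (r - r')`
of the characteristic polynomial `χ` stays within `4ε(|α| + |β|) + 15ε² < |α||β|` of `αβ` on the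
disc `|r - T₃₃| ≤ 2ε`. Hence `χ` has at most one root there, and `χ'` does not vanish at it.
A root exists because `|χ(T₃₃)| = O(ε²)` is smaller than `ρ³`, where `ρ` is the distance from
`T₃₃` to the other two Gershgorin discs. When `χ` and `e^z` are real, the conjugate of `τ₃` is a
root equally close to `e^z`, hence equal to `τ₃`.
-/

theorem Polynomial.Monic.exists_isRoot_norm_sub_lt_of_norm_eval_lt {K : Type*} [NormedField K]
    {p : K[X]} (hp : p.Monic) (hsplit : p.Splits) {x : K} {ρ : ℝ} (hρ : 0 ≤ ρ)
    (h : ‖p.eval x‖ < ρ ^ p.natDegree) : ∃ r, p.IsRoot r ∧ ‖x - r‖ < ρ := by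
  by_contra! hfar
  refine h.not_ge ?_
  calc ρ ^ p.natDegree = (p.roots.map fun _ => ρ).prod := by
        simp [hsplit.natDegree_eq_card_roots]
    _ ≤ (p.roots.map fun r => ‖x - r‖).prod :=
        Multiset.prod_map_le_prod_map₀ _ _ (fun _ _ => hρ)
          fun r hr => hfar r ((mem_roots hp.ne_zero).mp hr)
    _ = ‖p.eval x‖ := by
        rw [hsplit.eval_eq_prod_roots_of_monic hp]
        change _ = normHom (α := K) _
        rw [map_multiset_prod, Multiset.map_map]
        rfl

namespace Matrix

section FinThree

variable {R : Type*} [CommRing R] (A : Matrix (Fin 3) (Fin 3) R)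

theorem charpoly_fin_three : A.charpoly =
    (X - C (A 0 0)) * (X - C (A 1 1)) * (X - C (A 2 2))
      - ((X - C (A 0 0)) * C (A 1 2 * A 2 1) + (X - C (A 1 1)) * C (A 0 2 * A 2 0)
        + (X - C (A 2 2)) * C (A 0 1 * A 1 0))
      - C (A 0 1 * A 1 2 * A 2 0 + A 0 2 * A 1 0 * A 2 1) := by
  simp only [charpoly, det_fin_three, charmatrix_apply, Fin.reduceEq,
    diagonal_apply_eq, diagonal_apply_ne, ne_eq, not_false_eq_true, map_mul, map_add]
  ring

/-- The divided difference `(χ r - χ r') / (r - r')` of the characteristic polynomial `χ`. -/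
def charpolyDivDiff (r r' : R) : R :=
  (r - A 0 0) * (r - A 1 1) + (r' - A 2 2) * (r + r' - A 0 0 - A 1 1)
    - (A 0 1 * A 1 0 + A 0 2 * A 2 0 + A 1 2 * A 2 1)

theorem eval_sub_eval_charpoly_eq_mul_charpolyDivDiff (r r' : R) :
    A.charpoly.eval r - A.charpoly.eval r' = (r - r') * A.charpolyDivDiff r r' := by
  simp only [charpoly_fin_three, charpolyDivDiff, eval_sub, eval_add, eval_mul, eval_X, eval_C]
  ring

theorem eval_derivative_charpoly_eq_charpolyDivDiff (r : R) :
    (derivative A.charpoly).eval r = A.charpolyDivDiff r r := by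
  simp only [charpoly_fin_three, charpolyDivDiff, derivative_sub, derivative_add,
    derivative_mul, derivative_X, derivative_C, eval_sub, eval_add, eval_mul, eval_X, eval_C,
    eval_one, eval_zero]
  ring

end FinThree

section Gershgorin

variable {𝕜 n : Type*} [NormedField 𝕜] [Fintype n] [DecidableEq n]

def gershgorinDisc (A : Matrix n n 𝕜) (j : n) : Set 𝕜 :=
  Metric.closedBall (A j j) (∑ k ∈ Finset.univ.erase j, ‖A j k‖)

theorem gershgorinDisc_of_mul (e : n → 𝕜) (G : Matrix n n 𝕜) (j : n) :
    gershgorinDisc (of fun j k => e j * G j k) j =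
      {τ | ‖τ - e j * G j j‖ ≤ ‖e j‖ * ∑ k ∈ Finset.univ.erase j, ‖G j k‖} := by
  ext τ
  simp only [gershgorinDisc, Metric.mem_closedBall, dist_eq_norm, of_apply, norm_mul,
    Finset.mul_sum, Set.mem_ofPred_eq]

theorem exists_mem_gershgorinDisc_of_isRoot {A : Matrix n n 𝕜} {μ : 𝕜}
    (hμ : A.charpoly.IsRoot μ) : ∃ k, μ ∈ gershgorinDisc A k :=
  eigenvalue_mem_ball <| (Module.End.hasEigenvalue_iff_isRoot_charpoly _ _).mpr <| by
    rwa [charpoly_toLin']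

end Gershgorin

section IsolatedDisc

variable {A : Matrix (Fin 3) (Fin 3) ℂ} {ε g : ℝ} (hoff : ∀ j k, j ≠ k → ‖A j k‖ ≤ ε)
include hoff

theorem nonneg_of_offDiag_le : 0 ≤ ε := (norm_nonneg _).trans (hoff 0 1 (by decide))

theorem norm_offDiag_mul_offDiag_le_sq (i j k l : Fin 3) (hij : i ≠ j) (hkl : k ≠ l) :
    ‖A i j * A k l‖ ≤ ε ^ 2 := by
  rw [norm_mul, sq]
  exact mul_le_mul (hoff i j hij) (hoff k l hkl) (norm_nonneg _) (nonneg_of_offDiag_le hoff)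

theorem charpolyDivDiff_ne_zero (h0 : 10 * ε < ‖A 2 2 - A 0 0‖)
    (h1 : 10 * ε < ‖A 2 2 - A 1 1‖) {r r' : ℂ} (hr : ‖r - A 2 2‖ ≤ 2 * ε)
    (hr' : ‖r' - A 2 2‖ ≤ 2 * ε) : A.charpolyDivDiff r r' ≠ 0 := by
  have hε := nonneg_of_offDiag_le hoff
  set u := r - A 2 2
  set u' := r' - A 2 2
  set α := A 2 2 - A 0 0
  set β := A 2 2 - A 1 1
  set E := A 0 1 * A 1 0 + A 0 2 * A 2 0 + A 1 2 * A 2 1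
  have hE : ‖E‖ ≤ 3 * ε ^ 2 := by
    refine (norm_add₃_le).trans ?_
    linarith [norm_offDiag_mul_offDiag_le_sq hoff 0 1 1 0 (by decide) (by decide),
      norm_offDiag_mul_offDiag_le_sq hoff 0 2 2 0 (by decide) (by decide),
      norm_offDiag_mul_offDiag_le_sq hoff 1 2 2 1 (by decide) (by decide)]
  have hsplit : A.charpolyDivDiff r r' =
      α * β + (u * (α + β) + u ^ 2 + u' * (u + u' + α + β) - E) := by
    simp only [charpolyDivDiff, u, u', α, β, E]; ring
  have hrest : ‖u * (α + β) + u ^ 2 + u' * (u + u' + α + β) - E‖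
      ≤ 4 * ε * (‖α‖ + ‖β‖) + 15 * ε ^ 2 :=
    calc _ ≤ ‖u‖ * (‖α‖ + ‖β‖) + ‖u‖ ^ 2 + ‖u'‖ * (‖u‖ + ‖u'‖ + ‖α‖ + ‖β‖) + ‖E‖ := by
          refine (norm_sub_le _ _).trans (add_le_add_left (norm_add₃_le.trans ?_) _)
          rw [norm_mul, norm_pow, norm_mul]
          gcongr
          · exact norm_add_le _ _
          · exact norm_add₄_le
      _ ≤ 2 * ε * (‖α‖ + ‖β‖) + (2 * ε) ^ 2 + 2 * ε * (2 * ε + 2 * ε + ‖α‖ + ‖β‖)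
            + 3 * ε ^ 2 := by gcongr
      _ = 4 * ε * (‖α‖ + ‖β‖) + 15 * ε ^ 2 := by ring
  rw [hsplit, ← norm_pos_iff]
  calc (0 : ℝ) < ‖α‖ * ‖β‖ - (4 * ε * (‖α‖ + ‖β‖) + 15 * ε ^ 2) := by nlinarith
    _ ≤ ‖α * β‖ - ‖u * (α + β) + u ^ 2 + u' * (u + u' + α + β) - E‖ := by
        rw [norm_mul]; linarith
    _ ≤ _ := norm_sub_le_norm_add _ _

theorem gershgorinDisc_subset_closedBall (j : Fin 3) :
    gershgorinDisc A j ⊆ Metric.closedBall (A j j) (2 * ε) := by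
  refine Metric.closedBall_subset_closedBall ?_
  calc ∑ k ∈ Finset.univ.erase j, ‖A j k‖ ≤ (Finset.univ.erase j).card • ε :=
        Finset.sum_le_card_nsmul _ _ _ fun k hk => hoff j k (Finset.ne_of_mem_erase hk).symm
    _ = 2 * ε := by simp [Finset.card_erase_of_mem]

theorem disjoint_gershgorinDisc {i j : Fin 3} (h : 4 * ε < ‖A i i - A j j‖) :
    Disjoint (gershgorinDisc A i) (gershgorinDisc A j) :=
  (Metric.closedBall_disjoint_closedBall (by rw [dist_eq_norm]; linarith)).mono
    (gershgorinDisc_subset_closedBall hoff i) (gershgorinDisc_subset_closedBall hoff j)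

theorem mem_gershgorinDisc_two_of_isRoot (h0 : g ≤ ‖A 2 2 - A 0 0‖) (h1 : g ≤ ‖A 2 2 - A 1 1‖)
    {r : ℂ} (hr : A.charpoly.IsRoot r) (hrg : ‖r - A 2 2‖ < g - 2 * ε) :
    r ∈ gershgorinDisc A 2 := by
  obtain ⟨k, hk⟩ := exists_mem_gershgorinDisc_of_isRoot hr
  have hk' := gershgorinDisc_subset_closedBall hoff k hk
  rw [Metric.mem_closedBall, dist_eq_norm] at hk'
  have hfar : g ≤ ‖A 2 2 - A k k‖ → False := fun hg => by
    linarith [norm_sub_le_norm_sub_add_norm_sub (A 2 2) r (A k k), norm_sub_rev r (A 2 2)]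
  fin_cases k
  exacts [(hfar h0).elim, (hfar h1).elim, hk]

theorem eq_of_isRoot_of_norm_sub_le (h0 : 10 * ε < ‖A 2 2 - A 0 0‖)
    (h1 : 10 * ε < ‖A 2 2 - A 1 1‖) {r r' : ℂ} (hr : A.charpoly.IsRoot r)
    (hr' : A.charpoly.IsRoot r') (hrε : ‖r - A 2 2‖ ≤ 2 * ε) (hr'ε : ‖r' - A 2 2‖ ≤ 2 * ε) :
    r = r' := by
  have h := A.eval_sub_eval_charpoly_eq_mul_charpolyDivDiff r r'
  rw [hr.eq_zero, hr'.eq_zero, sub_zero, eq_comm, mul_eq_zero] at h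
  exact sub_eq_zero.mp (h.resolve_right (charpolyDivDiff_ne_zero hoff h0 h1 hrε hr'ε))

theorem rootMultiplicity_charpoly_eq_one (h0 : 10 * ε < ‖A 2 2 - A 0 0‖)
    (h1 : 10 * ε < ‖A 2 2 - A 1 1‖) {r : ℂ} (hr : A.charpoly.IsRoot r)
    (hrε : ‖r - A 2 2‖ ≤ 2 * ε) : A.charpoly.rootMultiplicity r = 1 := by
  have hne := A.charpoly_monic.ne_zero
  have hsimple : ¬ 1 < A.charpoly.rootMultiplicity r := fun h =>
    charpolyDivDiff_ne_zero hoff h0 h1 hrε hrε <| by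
      rw [← eval_derivative_charpoly_eq_charpolyDivDiff]
      exact ((one_lt_rootMultiplicity_iff_isRoot hne).mp h).2
  have := (rootMultiplicity_pos hne).mpr hr
  omega

theorem exists_isRoot_mem_gershgorinDisc_two (hg : 10 * ε < g) (h0 : g ≤ ‖A 2 2 - A 0 0‖)
    (h1 : g ≤ ‖A 2 2 - A 1 1‖)
    (hsize : 4 * (‖A 2 2 - A 0 0‖ + ‖A 2 2 - A 1 1‖) * ε ^ 2 ≤ g ^ 3) :
    ∃ r, A.charpoly.IsRoot r ∧ r ∈ gershgorinDisc A 2 := by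
  have hε := nonneg_of_offDiag_le hoff
  have heval : ‖A.charpoly.eval (A 2 2)‖
      ≤ (‖A 2 2 - A 0 0‖ + ‖A 2 2 - A 1 1‖) * ε ^ 2 + 2 * ε ^ 3 := by
    have hval : A.charpoly.eval (A 2 2) =
        -((A 2 2 - A 0 0) * (A 1 2 * A 2 1) + (A 2 2 - A 1 1) * (A 0 2 * A 2 0)
          + (A 0 1 * A 1 2) * A 2 0 + (A 0 2 * A 1 0) * A 2 1) := by
      simp only [charpoly_fin_three, eval_sub, eval_add, eval_mul, eval_X, eval_C]
      ring
    rw [hval, norm_neg]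
    refine norm_add₄_le.trans ?_
    simp only [norm_mul (A 2 2 - _), norm_mul (_ * _) (A 2 _)]
    calc _ ≤ ‖A 2 2 - A 0 0‖ * ε ^ 2 + ‖A 2 2 - A 1 1‖ * ε ^ 2 + ε ^ 2 * ε + ε ^ 2 * ε := by
          gcongr
          exacts [norm_offDiag_mul_offDiag_le_sq hoff 1 2 2 1 (by decide) (by decide),
            norm_offDiag_mul_offDiag_le_sq hoff 0 2 2 0 (by decide) (by decide),
            norm_offDiag_mul_offDiag_le_sq hoff 0 1 1 2 (by decide) (by decide),
            hoff 2 0 (by decide),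
            norm_offDiag_mul_offDiag_le_sq hoff 0 2 1 0 (by decide) (by decide),
            hoff 2 1 (by decide)]
      _ = _ := by ring
  obtain ⟨r, hr, hrg⟩ := A.charpoly_monic.exists_isRoot_norm_sub_lt_of_norm_eval_lt
    (IsAlgClosed.splits _) (x := A 2 2) (ρ := g - 2 * ε) (by linarith) <| by
      rw [charpoly_natDegree_eq_dim, Fintype.card_fin]
      have hg0 : 0 < g := by linarith
      have hρ : (4 / 5 * g) ^ 3 ≤ (g - 2 * ε) ^ 3 :=
        pow_le_pow_left₀ (by positivity) (by linarith) 3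
      have hε3 : ε ^ 3 ≤ (g / 10) ^ 3 := pow_le_pow_left₀ hε (by linarith) 3
      nlinarith [pow_pos hg0 3]
  exact ⟨r, hr, mem_gershgorinDisc_two_of_isRoot hoff h0 h1 hr (by rwa [norm_sub_rev])⟩

end IsolatedDisc
end Matrix

theorem Complex.mul_norm_exp_le_norm_exp_sub_exp {w z : ℂ} {a : ℝ}
    (h : a ≤ ‖exp (w - z) - 1‖) : a * ‖exp z‖ ≤ ‖exp z - exp w‖ := by
  rw [norm_sub_rev, ← sub_add_cancel w z, exp_add, ← sub_one_mul, norm_mul]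
  exact mul_le_mul_of_nonneg_right h (norm_nonneg _)

theorem Complex.norm_exp_le_norm_exp {w z : ℂ} (h : w.re ≤ z.re) : ‖exp w‖ ≤ ‖exp z‖ := by
  rw [norm_exp, norm_exp]
  exact Real.exp_le_exp.mpr h

theorem Polynomial.im_eq_zero_of_forall_isRoot_eq {p : ℂ[X]} (hp : ∀ i, (p.coeff i).im = 0)
    {x τ : ℂ} {ρ : ℝ} (hx : x.im = 0) (hτ : p.IsRoot τ) (hτx : ‖τ - x‖ < ρ)
    (huniq : ∀ σ, p.IsRoot σ → ‖σ - x‖ < ρ → σ = τ) : τ.im = 0 := by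
  have hconj : p.IsRoot (starRingEnd ℂ τ) := by
    have hmap : p.map (starRingEnd ℂ) = p := by
      ext n
      exact (coeff_map _ _).trans (conj_eq_iff_im.mpr (hp n))
    rw [IsRoot, ← hmap, eval_map, eval₂_hom, hτ.eq_zero, map_zero]
  have hnorm : ‖starRingEnd ℂ τ - x‖ = ‖τ - x‖ := by
    rw [← norm_conj, map_sub, conj_conj, conj_eq_iff_im.mpr hx]
  exact conj_eq_iff_im.mp (huniq _ hconj (hnorm ▸ hτx))

section RowScaled

variable {e : Fin 3 → ℂ} {G T : Matrix (Fin 3) (Fin 3) ℂ} {δ : ℝ}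

theorem norm_offDiag_le_of_rowScaled (hT : T = of fun j k => e j * G j k)
    (hGo : ∀ j k, j ≠ k → ‖G j k‖ ≤ δ) (he : ∀ j, ‖e j‖ ≤ ‖e 2‖) (j k : Fin 3) (hjk : j ≠ k) :
    ‖T j k‖ ≤ ‖e 2‖ * δ := by
  rw [hT, of_apply, norm_mul]
  exact mul_le_mul (he j) (hGo j k hjk) (norm_nonneg _) ((norm_nonneg _).trans (he j))

theorem norm_diag_two_sub_le_of_rowScaled (hT : T = of fun j k => e j * G j k)
    (hGd : ∀ j, ‖G j j - 1‖ ≤ δ) : ‖T 2 2 - e 2‖ ≤ ‖e 2‖ * δ := by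
  rw [hT, of_apply, ← mul_sub_one, norm_mul]
  exact mul_le_mul_of_nonneg_left (hGd 2) (norm_nonneg _)

theorem norm_diag_sub_bounds_of_rowScaled (hT : T = of fun j k => e j * G j k) (hδ : δ ≤ 1 / 300)
    (hGd : ∀ j, ‖G j j - 1‖ ≤ δ) {j : Fin 3} (he : ‖e j‖ ≤ ‖e 2‖)
    (hgap : ‖e 2‖ / 3 ≤ ‖e 2 - e j‖) :
    ‖e 2‖ / 4 ≤ ‖T 2 2 - T j j‖ ∧ ‖T 2 2 - T j j‖ ≤ 3 * ‖e 2‖ := by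
  have hδ0 : 0 ≤ δ := (norm_nonneg _).trans (hGd 0)
  have hpert : ‖(T 2 2 - T j j) - (e 2 - e j)‖ ≤ 2 * δ * ‖e 2‖ :=
    calc ‖(T 2 2 - T j j) - (e 2 - e j)‖ = ‖e 2 * (G 2 2 - 1) - e j * (G j j - 1)‖ := by
          simp only [hT, of_apply]; ring_nf
      _ ≤ ‖e 2‖ * ‖G 2 2 - 1‖ + ‖e j‖ * ‖G j j - 1‖ := by
          rw [← norm_mul, ← norm_mul]; exact norm_sub_le _ _
      _ ≤ ‖e 2‖ * δ + ‖e 2‖ * δ := by gcongr <;> exact hGd _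
      _ = 2 * δ * ‖e 2‖ := by ring
  have hclose := (abs_norm_sub_norm_le _ _).trans hpert
  have hfar : ‖e 2 - e j‖ ≤ 2 * ‖e 2‖ := by linarith [norm_sub_le (e 2) (e j)]
  constructor <;> nlinarith [abs_le.mp hclose, norm_nonneg (e 2)]

theorem gershgorinDisc_two_subset_of_rowScaled (hT : T = of fun j k => e j * G j k)
    (hGd : ∀ j, ‖G j j - 1‖ ≤ δ) (hGo : ∀ j k, j ≠ k → ‖G j k‖ ≤ δ) (he : ∀ j, ‖e j‖ ≤ ‖e 2‖) :
    gershgorinDisc T 2 ⊆ Metric.closedBall (e 2) (3 * δ * ‖e 2‖) := fun τ hτ => by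
  have hτ' := gershgorinDisc_subset_closedBall (norm_offDiag_le_of_rowScaled hT hGo he) 2 hτ
  rw [Metric.mem_closedBall, dist_eq_norm] at hτ' ⊢
  linarith [norm_sub_le_norm_sub_add_norm_sub τ (T 2 2) (e 2),
    norm_diag_two_sub_le_of_rowScaled hT hGd]

theorem disjoint_gershgorinDisc_of_rowScaled (hT : T = of fun j k => e j * G j k)
    (he2 : e 2 ≠ 0) (hδ : δ ≤ 1 / 300) (hGd : ∀ j, ‖G j j - 1‖ ≤ δ)
    (hGo : ∀ j k, j ≠ k → ‖G j k‖ ≤ δ) (he : ∀ j, ‖e j‖ ≤ ‖e 2‖) {j : Fin 3}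
    (hgap : ‖e 2‖ / 3 ≤ ‖e 2 - e j‖) : Disjoint (gershgorinDisc T j) (gershgorinDisc T 2) := by
  have hc : 0 < ‖e 2‖ := norm_pos_iff.mpr he2
  have hδ0 : 0 ≤ δ := (norm_nonneg _).trans (hGd 0)
  refine disjoint_gershgorinDisc (norm_offDiag_le_of_rowScaled hT hGo he) ?_
  rw [norm_sub_rev]
  nlinarith [(norm_diag_sub_bounds_of_rowScaled hT hδ hGd (he j) hgap).1]

theorem exists_isolated_root_of_rowScaled (hT : T = of fun j k => e j * G j k)
    (he2 : e 2 ≠ 0) (hδ : δ ≤ 1 / 300) (hGd : ∀ j, ‖G j j - 1‖ ≤ δ)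
    (hGo : ∀ j k, j ≠ k → ‖G j k‖ ≤ δ) (he : ∀ j, ‖e j‖ ≤ ‖e 2‖)
    (hgap : ∀ j, j ≠ 2 → ‖e 2‖ / 3 ≤ ‖e 2 - e j‖) :
    ∃ τ ∈ gershgorinDisc T 2, T.charpoly.IsRoot τ ∧ T.charpoly.rootMultiplicity τ = 1 ∧
      ∀ σ, T.charpoly.IsRoot σ → ‖σ - e 2‖ < ‖e 2‖ / 5 → σ = τ := by
  set c := ‖e 2‖
  have hc : 0 < c := norm_pos_iff.mpr he2
  have hδ0 : 0 ≤ δ := (norm_nonneg _).trans (hGd 0)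
  have hoff := norm_offDiag_le_of_rowScaled hT hGo he
  have hgap' : ∀ j, j ≠ 2 → c / 4 ≤ ‖T 2 2 - T j j‖ ∧ ‖T 2 2 - T j j‖ ≤ 3 * c := fun j hj =>
    norm_diag_sub_bounds_of_rowScaled hT hδ hGd (he j) (hgap j hj)
  obtain ⟨h0, h0'⟩ := hgap' 0 (by decide)
  obtain ⟨h1, h1'⟩ := hgap' 1 (by decide)
  have hg : 10 * (c * δ) < c / 4 := by nlinarith
  have hsize : 4 * (‖T 2 2 - T 0 0‖ + ‖T 2 2 - T 1 1‖) * (c * δ) ^ 2 ≤ (c / 4) ^ 3 := by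
    have hδ2 : δ ^ 2 ≤ 1 / 1536 := by nlinarith
    calc _ ≤ 4 * (3 * c + 3 * c) * (c * δ) ^ 2 := by gcongr
      _ = 24 * c ^ 3 * δ ^ 2 := by ring
      _ ≤ 24 * c ^ 3 * (1 / 1536) := by gcongr
      _ = (c / 4) ^ 3 := by ring
  have hnear : ∀ {τ}, τ ∈ gershgorinDisc T 2 → ‖τ - T 2 2‖ ≤ 2 * (c * δ) := fun h => by
    simpa [dist_eq_norm] using gershgorinDisc_subset_closedBall hoff 2 h
  obtain ⟨τ, hτ, hτΓ⟩ := exists_isRoot_mem_gershgorinDisc_two hoff hg h0 h1 hsize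
  refine ⟨τ, hτΓ, hτ, rootMultiplicity_charpoly_eq_one hoff (hg.trans_le h0) (hg.trans_le h1) hτ
    (hnear hτΓ), fun σ hσ hσe => eq_of_isRoot_of_norm_sub_le hoff (hg.trans_le h0)
      (hg.trans_le h1) hσ hτ (hnear ?_) (hnear hτΓ)⟩
  refine mem_gershgorinDisc_two_of_isRoot hoff h0 h1 hσ ?_
  nlinarith [norm_sub_le_norm_sub_add_norm_sub σ (e 2) (T 2 2),
    norm_diag_two_sub_le_of_rowScaled hT hGd, norm_sub_rev (e 2) (T 2 2)]

end RowScaled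

theorem norm_exp_pow_succ_mul_le {ω z : ℂ} (hω3 : ω ^ 3 = 1)
    (hre1 : (ω * z).re ≤ (ω ^ 2 * z).re) (hre2 : (ω ^ 2 * z).re ≤ z.re) (j : Fin 3) :
    ‖exp (ω ^ ((j : ℕ) + 1) * z)‖ ≤ ‖exp z‖ := by
  fin_cases j
  · simpa using norm_exp_le_norm_exp (hre1.trans hre2)
  · simpa using norm_exp_le_norm_exp hre2
  · simp [hω3]

theorem div_three_le_norm_exp_sub_exp_pow_succ_mul {ω z : ℂ}
    (he1 : ‖exp ((ω - 1) * z)‖ ≤ Real.exp (-(3 / 2)))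
    (he2 : 1 / 3 < ‖exp ((ω ^ 2 - 1) * z) - 1‖) {j : Fin 3} (hj : j ≠ 2) :
    ‖exp z‖ / 3 ≤ ‖exp z - exp (ω ^ ((j : ℕ) + 1) * z)‖ := by
  suffices h : 1 / 3 ≤ ‖exp (ω ^ ((j : ℕ) + 1) * z - z) - 1‖ by
    linarith [mul_norm_exp_le_norm_exp_sub_exp h]
  fin_cases j
  · have hexp : Real.exp (-(3 / 2)) ≤ 2 / 3 := by
      rw [Real.exp_neg]
      exact inv_le_of_inv_le₀ (by norm_num) (by linarith [Real.add_one_le_exp (3 / 2 : ℝ)])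
    have hsmall := norm_sub_norm_le 1 (exp ((ω - 1) * z))
    rw [norm_one, norm_sub_rev] at hsmall
    simp only [zero_add, pow_one, show ω * z - z = (ω - 1) * z by ring]
    linarith
  · simpa [show ω ^ 2 * z - z = (ω ^ 2 - 1) * z by ring] using he2.le
  · exact absurd rfl hj

theorem gershgorin_multiplier_general
    (ω z : ℂ) (hω : ω = Complex.exp (2 * Real.pi * Complex.I / 3))
    (hre1 : (ω * z).re ≤ (ω ^ 2 * z).re) (hre2 : (ω ^ 2 * z).re ≤ z.re)
    (he1 : ‖Complex.exp ((ω - 1) * z)‖ ≤ Real.exp (-(3/2)))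
    (he2 : 1/3 < ‖Complex.exp ((ω ^ 2 - 1) * z) - 1‖)
    (δ : ℝ) (hδ : δ ≤ 1/300)
    (G : Matrix (Fin 3) (Fin 3) ℂ)
    (hGd : ∀ j : Fin 3, ‖G j j - 1‖ ≤ δ)
    (hGo : ∀ j k : Fin 3, j ≠ k → ‖G j k‖ ≤ δ)
    (T : Matrix (Fin 3) (Fin 3) ℂ)
    (hT : T = Matrix.of fun (j k : Fin 3) => Complex.exp (ω ^ ((j : ℕ) + 1) * z) * G j k)
    (Γ : Fin 3 → Set ℂ)
    (hΓ : ∀ j : Fin 3, Γ j = {τ : ℂ |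
      ‖τ - Complex.exp (ω ^ ((j : ℕ) + 1) * z) * G j j‖
        ≤ ‖Complex.exp (ω ^ ((j : ℕ) + 1) * z)‖ *
            ∑ k ∈ Finset.univ.erase j, ‖G j k‖}) :
    Γ 0 ∩ Γ 2 = ∅ ∧ Γ 1 ∩ Γ 2 = ∅ ∧
    ∃ τ₃ : ℂ, τ₃ ∈ Γ 2 ∧ T.charpoly.IsRoot τ₃ ∧
      T.charpoly.rootMultiplicity τ₃ = 1 ∧
      (∀ τ : ℂ, τ ∈ Γ 2 → T.charpoly.IsRoot τ → τ = τ₃) ∧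
      ‖τ₃ - Complex.exp z‖ ≤ 3 * δ * ‖Complex.exp z‖ ∧
      (z.im = 0 → (∀ i : ℕ, (T.charpoly.coeff i).im = 0) →
        τ₃.im = 0 ∧ Real.exp z.re * (1 - 3 * δ) ≤ τ₃.re ∧ 0 < τ₃.re) := by
  have hω3 : ω ^ 3 = 1 := by
    simpa [hω] using (Complex.isPrimitiveRoot_exp 3 (by norm_num)).pow_eq_one
  set e : Fin 3 → ℂ := fun j => exp (ω ^ ((j : ℕ) + 1) * z)
  set c := ‖exp z‖
  have hrow2 : e 2 = exp z := by simp [e, hω3]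
  have hT : T = of fun j k => e j * G j k := hT
  obtain rfl : Γ = gershgorinDisc T := funext fun j => by rw [hΓ, hT, gershgorinDisc_of_mul]
  have he : ∀ j, ‖e j‖ ≤ ‖e 2‖ := fun j => hrow2 ▸ norm_exp_pow_succ_mul_le hω3 hre1 hre2 j
  have hgap : ∀ j, j ≠ 2 → ‖e 2‖ / 3 ≤ ‖e 2 - e j‖ := fun j hj =>
    hrow2 ▸ div_three_le_norm_exp_sub_exp_pow_succ_mul he1 he2 hj
  have hne : e 2 ≠ 0 := hrow2 ▸ exp_ne_zero z
  obtain ⟨τ₃, hτΓ, hτ, hmult, huniq⟩ :=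
    exists_isolated_root_of_rowScaled hT hne hδ hGd hGo he hgap
  have hsub : gershgorinDisc T 2 ⊆ Metric.closedBall (exp z) (3 * δ * c) := by
    simpa only [hrow2] using gershgorinDisc_two_subset_of_rowScaled hT hGd hGo he
  have hτz : ‖τ₃ - exp z‖ ≤ 3 * δ * c := mem_closedBall_iff_norm.mp (hsub hτΓ)
  have hc : 0 < c := norm_pos_iff.mpr (exp_ne_zero z)
  refine ⟨Set.disjoint_iff_inter_eq_empty.mp <|
      disjoint_gershgorinDisc_of_rowScaled hT hne hδ hGd hGo he (hgap 0 (by decide)),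
    Set.disjoint_iff_inter_eq_empty.mp <|
      disjoint_gershgorinDisc_of_rowScaled hT hne hδ hGd hGo he (hgap 1 (by decide)),
    τ₃, hτΓ, hτ, hmult, fun σ hσΓ hσ => huniq σ hσ ?_, hτz, fun hz hcoeff => ?_⟩
  · rw [hrow2]; nlinarith [mem_closedBall_iff_norm.mp (hsub hσΓ)]
  have hzre : exp z = Real.exp z.re := by
    rw [ofReal_exp, show (z.re : ℂ) = z from Complex.ext rfl hz.symm]
  have hτre : Real.exp z.re - τ₃.re ≤ 3 * δ * c := by
    have h := (re_le_norm (exp z - τ₃)).trans ((norm_sub_rev _ _).trans_le hτz)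
    rwa [sub_re, hzre, ofReal_re] at h
  have hc_eq : c = Real.exp z.re := norm_exp z
  refine ⟨im_eq_zero_of_forall_isRoot_eq hcoeff (x := exp z) (ρ := c / 5)
    (by rw [hzre, ofReal_im]) hτ (by nlinarith) fun σ hσ hσz => huniq σ hσ (by rwa [hrow2]),
    by nlinarith, by nlinarith⟩

/-- Gershgorin separation for `T = (e^{ω^j z} G_{jk})`. Under the stated
conditions on `z` and the perturbation bounds `δ ≤ 1/300` on `G`, the Gershgorin disc `Γ₃`
is disjoint from `Γ₁` and `Γ₂`, `T` has exactly one eigenvalue `τ₃` in `Γ₃`, of algebraic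
multiplicity one, with `|τ₃ − e^z| ≤ 3δ|e^z|`; and if `z` is real and the characteristic
polynomial of `T` has real coefficients, then `τ₃` is real and `τ₃ ≥ e^z(1 − 3δ) > 0`. -/
theorem gershgorin_multiplier
    (ω z : ℂ) (hω : ω = Complex.exp (2 * Real.pi * Complex.I / 3))
    (hre1 : (ω * z).re ≤ (ω ^ 2 * z).re) (hre2 : (ω ^ 2 * z).re ≤ z.re)
    (he1 : ‖Complex.exp ((ω - 1) * z)‖ ≤ Real.exp (-(3/2)))
    (he2 : 1/3 < ‖Complex.exp ((ω ^ 2 - 1) * z) - 1‖)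
    (δ : ℝ) (hδ0 : 0 ≤ δ) (hδ : δ ≤ 1/300)
    (G : Matrix (Fin 3) (Fin 3) ℂ)
    (hGd : ∀ j : Fin 3, ‖G j j - 1‖ ≤ δ)
    (hGo : ∀ j k : Fin 3, j ≠ k → ‖G j k‖ ≤ δ)
    (T : Matrix (Fin 3) (Fin 3) ℂ)
    (hT : T = Matrix.of fun (j k : Fin 3) => Complex.exp (ω ^ ((j : ℕ) + 1) * z) * G j k)
    (Γ : Fin 3 → Set ℂ)
    (hΓ : ∀ j : Fin 3, Γ j = {τ : ℂ |
      ‖τ - Complex.exp (ω ^ ((j : ℕ) + 1) * z) * G j j‖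
        ≤ ‖Complex.exp (ω ^ ((j : ℕ) + 1) * z)‖ *
            ∑ k ∈ Finset.univ.erase j, ‖G j k‖}) :
    Γ 0 ∩ Γ 2 = ∅ ∧ Γ 1 ∩ Γ 2 = ∅ ∧
    ∃ τ₃ : ℂ, τ₃ ∈ Γ 2 ∧ T.charpoly.IsRoot τ₃ ∧
      T.charpoly.rootMultiplicity τ₃ = 1 ∧
      (∀ τ : ℂ, τ ∈ Γ 2 → T.charpoly.IsRoot τ → τ = τ₃) ∧
      ‖τ₃ - Complex.exp z‖ ≤ 3 * δ * ‖Complex.exp z‖ ∧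
      (z.im = 0 → (∀ i : ℕ, (T.charpoly.coeff i).im = 0) →
        τ₃.im = 0 ∧ Real.exp z.re * (1 - 3 * δ) ≤ τ₃.re ∧ 0 < τ₃.re) :=
  gershgorin_multiplier_general ω z hω hre1 hre2 he1 he2 δ hδ G hGd hGo T hT Γ hΓ
end
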